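/- arXiv:0802.1872 — 9 statements merged into one kernel-verified Lean document; each statement's English description precedes it below -/
import Mathlib

section
/- Every countable conical commutative monoid admits an order-embedding into a countable conical refinement monoid. -/
/-- The algebraic preorder on a commutative monoid: `x ≤ y` iff `∃ z, y = x + z`. -/
def AlgLE {M : Type*} [AddCommMonoid M] (x y : M) : Prop := ∃ z, y = x + z

/-- A monoid is conical if `x + y = 0` implies `x = 0` and `y = 0`. -/
def IsConical (M : Type*) [AddCommMonoid M] : Prop := ∀ x y : M, x + y = 0 → x = 0 ∧ y = 0

/-- A refinement monoid: every equality `a + b = c + d` admits a refinement. -/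
def IsRefinement (M : Type*) [AddCommMonoid M] : Prop :=
  ∀ a b c d : M, a + b = c + d →
    ∃ x y z w : M, a = x + y ∧ b = z + w ∧ c = x + z ∧ d = y + w

/-- Separative: `a + a = a + b` and `b + b = a + b` imply `a = b`. -/
def IsSeparative (M : Type*) [AddCommMonoid M] : Prop :=
  ∀ a b : M, a + a = a + b → b + b = a + b → a = b

/-- A prime element: `p ≠ 0` and `p ≤ a + b` implies `p ≤ a` or `p ≤ b`
(algebraic preorder). -/
def IsPrimeElem {M : Type*} [AddCommMonoid M] (p : M) : Prop :=
  p ≠ 0 ∧ ∀ a b : M, AlgLE p (a + b) → AlgLE p a ∨ AlgLE p b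

/-- Primely generated: every element is a finite sum of prime elements. -/
def PrimelyGenerated (M : Type*) [AddCommMonoid M] : Prop :=
  ∀ x : M, ∃ l : Multiset M, (∀ p ∈ l, IsPrimeElem p) ∧ x = l.sum

/-- Antisymmetric: the algebraic preorder is a partial order. -/
def IsAntisymmetric (M : Type*) [AddCommMonoid M] : Prop :=
  ∀ x y : M, AlgLE x y → AlgLE y x → x = y

/-- A primitive monoid: an antisymmetric, primely generated refinement monoid. -/
def IsPrimitive (M : Type*) [AddCommMonoid M] : Prop :=
  IsAntisymmetric M ∧ PrimelyGenerated M ∧ IsRefinement M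

/-- `N` is a countable conical refinement monoid into which `M` order-embeds. -/
def OrderEmbedsIntoCCRM (M : Type) [AddCommMonoid M] (N : Type) [AddCommMonoid N] : Prop :=
  Countable N ∧ IsConical N ∧ IsRefinement N ∧
    ∃ f : M →+ N, Function.Injective f ∧ ∀ x y : M, AlgLE x y ↔ AlgLE (f x) (f y)


/-!
Adjoin to `M`, for every equation `a + b = c + d` with nonzero terms, four generators
`x, y, z, w` subject to `a = x + y`, `b = z + w`, `c = x + z`, `d = y + w`; they sit on the cells
of a `2 × 2` matrix whose rows add up to `a, b` and whose columns add up to `c, d`. Write an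
element of the resulting monoid `Ext M` as `m + g` with `m ∈ M` and `g` a multiset of generators.
Call `m + g` an expansion of `p ∈ M` when `g` can be grouped into whole rows and columns whose
values add up with `m` to `p`. The defining relations preserve this notion (two columns crossing
a row can be traded for that row and the parallel one), and `m + 0` expands only to `m`; hence
`M → Ext M` is injective and reflects the algebraic order, and `Ext M` is conical when `M` is.
Iterating the construction and passing to the direct limit refines every equation.
-/

universe u

theorem AlgLE.map {M N F : Type*} [AddCommMonoid M] [AddCommMonoid N] [FunLike F M N]
    [AddMonoidHomClass F M N] (f : F) {x y : M} (h : AlgLE x y) : AlgLE (f x) (f y) := by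
  obtain ⟨z, rfl⟩ := h
  exact ⟨f z, map_add f x z⟩

theorem exists_refinement_of_eq_zero {M : Type*} [AddCommMonoid M] {a b c d : M}
    (h : a + b = c + d) (h0 : a = 0 ∨ b = 0 ∨ c = 0 ∨ d = 0) :
    ∃ x y z w : M, a = x + y ∧ b = z + w ∧ c = x + z ∧ d = y + w := by
  rcases h0 with rfl | rfl | rfl | rfl
  · exact ⟨0, 0, c, d, by simp, by rw [← h, zero_add], by simp, by simp⟩
  · exact ⟨c, d, 0, 0, by rw [← h, add_zero], by simp, by simp, by simp⟩
  · exact ⟨0, a, 0, b, by simp, by simp, by simp, by rw [h, zero_add]⟩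
  · exact ⟨a, 0, b, 0, by simp, by simp, by rw [h, add_zero], by simp⟩

namespace DirectLimit

variable {ι : Type*} [Preorder ι] [IsDirectedOrder ι] {G : ι → Type*}
  [∀ i, AddCommMonoid (G i)] {f : ∀ i j, i ≤ j → G i →+ G j} [DirectedSystem G (f · · ·)]

theorem mk_eq_mk_iff {i : ι} {x y : G i} :
    (⟦⟨i, x⟩⟧ : DirectLimit G f) = ⟦⟨i, y⟩⟧ ↔ ∃ j hij, f i j hij x = f i j hij y := by
  constructor
  · intro h
    obtain ⟨j, hij, _, hj⟩ := Quotient.exact h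
    exact ⟨j, hij, hj⟩
  · rintro ⟨j, hij, h⟩
    exact Quotient.sound ⟨j, hij, hij, h⟩

variable [Nonempty ι]

variable (f) in
def addMonoidHomOf (i : ι) : G i →+ DirectLimit G f where
  toFun x := ⟦⟨i, x⟩⟧
  map_zero' := (zero_def i).symm
  map_add' x y := (add_def i x y).symm

theorem isConical (h : ∀ i, IsConical (G i)) : IsConical (DirectLimit G f) := by
  refine DirectLimit.induction₂ _ fun i x y hxy => ?_
  rw [add_def, zero_def i, mk_eq_mk_iff] at hxy
  obtain ⟨j, hij, hxy⟩ := hxy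
  rw [map_add, map_zero] at hxy
  obtain ⟨hx, hy⟩ := h j _ _ hxy
  rw [zero_def (f := f) i, mk_eq_mk_iff, mk_eq_mk_iff]
  exact ⟨⟨j, hij, by rw [hx, map_zero]⟩, ⟨j, hij, by rw [hy, map_zero]⟩⟩

theorem algLE_of_algLE_addMonoidHomOf
    (h : ∀ i j hij (x y : G i), AlgLE (f i j hij x) (f i j hij y) → AlgLE x y)
    {i : ι} {x y : G i} (hxy : AlgLE (addMonoidHomOf f i x) (addMonoidHomOf f i y)) :
    AlgLE x y := by
  obtain ⟨z, hz⟩ := hxy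
  obtain ⟨j, z, rfl⟩ := exists_eq_mk _ z
  obtain ⟨k, hik, hjk⟩ := exists_ge_ge i j
  change (⟦⟨i, y⟩⟧ : DirectLimit G f) = ⟦⟨i, x⟩⟧ + ⟦⟨j, z⟩⟧ at hz
  rw [← mk_apply j k z hjk, ← mk_apply i k x hik, ← mk_apply i k y hik, add_def,
    mk_eq_mk_iff] at hz
  obtain ⟨l, hkl, hl⟩ := hz
  refine h i l (hik.trans hkl) x y ⟨f k l hkl (f j k hjk z), ?_⟩
  rw [← DirectedSystem.map_map' f hik hkl, ← DirectedSystem.map_map' f hik hkl, hl, map_add]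

theorem isRefinement
    (h : ∀ i (a b c d : G i), a + b = c + d → ∃ j hij, ∃ x y z w : G j,
      f i j hij a = x + y ∧ f i j hij b = z + w ∧ f i j hij c = x + z ∧ f i j hij d = y + w) :
    IsRefinement (DirectLimit G f) := by
  intro α β γ δ hαβγδ
  obtain ⟨i, a, b, c, rfl, rfl, rfl⟩ := exists_eq_mk₃ _ α β γ
  obtain ⟨j, d, rfl⟩ := exists_eq_mk _ δ
  obtain ⟨k, hik, hjk⟩ := exists_ge_ge i j
  rw [← mk_apply i k a hik, ← mk_apply i k b hik, ← mk_apply i k c hik,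
    ← mk_apply j k d hjk, add_def, add_def, mk_eq_mk_iff] at hαβγδ
  obtain ⟨l, hkl, hl⟩ := hαβγδ
  rw [map_add, map_add] at hl
  obtain ⟨m, hlm, x, y, z, w, hx, hy, hz, hw⟩ := h l _ _ _ _ hl
  have push : ∀ {n} (hn : n ≤ k) (u : G n) (v₁ v₂ : G m),
      f l m hlm (f k l hkl (f n k hn u)) = v₁ + v₂ →
        (⟦⟨n, u⟩⟧ : DirectLimit G f) = ⟦⟨m, v₁⟩⟧ + ⟦⟨m, v₂⟩⟧ := by
    intro n hn u v₁ v₂ huv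
    rw [add_def, ← huv, DirectedSystem.map_map' f, DirectedSystem.map_map' f, mk_apply]
  exact ⟨_, _, _, _, push hik a x y hx, push hik b z w hy, push hik c x z hz, push hjk d y w hw⟩

end DirectLimit

namespace RefinementExt

/-- The `s`-th cell of row `t` (if `k = false`) or of column `t` (if `k = true`) of a `2 × 2`
matrix. -/
def cell : Bool → Bool → Bool → Bool × Bool
  | false, t, s => (t, s)
  | true, t, s => (s, t)

def cells (k t : Bool) : Multiset (Bool × Bool) := {cell k t false, cell k t true}

theorem cell_mem_cells (k t s : Bool) : cell k t s ∈ cells k t := by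
  cases s <;> simp [cells]

theorem eq_of_cell_mem_cells {k t s k' t' : Bool} (h : cell k t s ∈ cells k' t') :
    (k' = k ∧ t' = t) ∨ (k' = !k ∧ t' = s) := by
  revert h; cases k <;> cases t <;> cases s <;> cases k' <;> cases t' <;> decide

theorem cells_add_cells_not (k t : Bool) :
    cells k t + cells k (!t) = cells (!k) false + cells (!k) true := by
  cases k <;> cases t <;> decide

variable (M : Type*) [AddCommMonoid M]

/-- `v k t` is the value of row `t` (if `k = false`) or of column `t` (if `k = true`) of the
matrix of generators. -/
def NondegEqn : Type _ :=
  {v : Bool → Bool → M // v false false + v false true = v true false + v true true ∧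
    ∀ k t, v k t ≠ 0}

-- `(e, k, t) : Line M` is the line `(k, t)` of `e` as in `cell`; `(e, c) : Gen M` is the
-- generator on the cell `c` of `e`.
abbrev Line : Type _ := NondegEqn M × Bool × Bool

abbrev Gen : Type _ := NondegEqn M × Bool × Bool

instance [Countable M] : Countable (NondegEqn M) :=
  inferInstanceAs (Countable (Subtype _))

variable {M}

def value (l : Line M) : M := l.1.1 l.2.1 l.2.2

def line (l : Line M) : Multiset (Gen M) := (cells l.2.1 l.2.2).map (Prod.mk l.1)

theorem value_add_value_not (e : NondegEqn M) (k t : Bool) :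
    value (e, k, t) + value (e, k, !t) = value (e, !k, false) + value (e, !k, true) := by
  have h := e.2.1
  cases k <;> cases t
  exacts [h, (add_comm _ _).trans h, h.symm, (add_comm _ _).trans h.symm]

theorem line_add_line_not (e : NondegEqn M) (k t : Bool) :
    line (e, k, t) + line (e, k, !t) = line (e, !k, false) + line (e, !k, true) := by
  simp only [line, ← Multiset.map_add, cells_add_cells_not]

theorem mem_line {e e' : NondegEqn M} {c : Bool × Bool} {k t : Bool} :
    (e', c) ∈ line (e, k, t) ↔ e' = e ∧ c ∈ cells k t := by
  simp only [line, Multiset.mem_map, Prod.mk.injEq]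
  constructor
  · rintro ⟨c', hc', rfl, rfl⟩
    exact ⟨rfl, hc'⟩
  · rintro ⟨rfl, hc⟩
    exact ⟨c, hc, rfl, rfl⟩

inductive ExtRel : M × Multiset (Gen M) → M × Multiset (Gen M) → Prop
  | line (l : Line M) : ExtRel (value l, 0) (0, line l)

variable (M) in
def extCon : AddCon (M × Multiset (Gen M)) := addConGen ExtRel

variable (M) in
abbrev Ext : Type _ := (extCon M).Quotient

instance [Countable M] : Countable (Ext M) :=
  inferInstanceAs (Countable (Quotient (extCon M).toSetoid))

variable (M) in
def of : M →+ Ext M := (extCon M).mk'.comp (AddMonoidHom.inl M (Multiset (Gen M)))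

def gen (e : NondegEqn M) (c : Bool × Bool) : Ext M := (extCon M).mk' (0, {(e, c)})

def Expands (p : M) (u : M × Multiset (Gen M)) : Prop :=
  ∃ P : Multiset (Line M), u.2 = P.bind line ∧ p = u.1 + (P.map value).sum

theorem expands_self (p : M) : Expands p (p, 0) := ⟨0, rfl, (add_zero p).symm⟩

theorem eq_of_expands_zero {p x : M} (h : Expands p (x, 0)) : p = x := by
  obtain ⟨P, hP, rfl⟩ := h
  suffices P = 0 by simp [this]
  refine Multiset.eq_zero_of_forall_notMem fun l hl => ?_
  have := Multiset.mem_bind.2 ⟨l, hl, mem_line.2 ⟨rfl, cell_mem_cells l.2.1 l.2.2 false⟩⟩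
  rw [← hP] at this
  exact Multiset.notMem_zero _ this

theorem mem_of_cell_mem_bind_line {P : Multiset (Line M)} {e : NondegEqn M} {k t s : Bool}
    (hP : (e, k, t) ∉ P) (h : (e, cell k t s) ∈ P.bind line) : (e, !k, s) ∈ P := by
  obtain ⟨⟨e', k', t'⟩, hl, hmem⟩ := Multiset.mem_bind.1 h
  obtain ⟨rfl, hc⟩ := mem_line.1 hmem
  rcases eq_of_cell_mem_cells hc with ⟨rfl, rfl⟩ | ⟨rfl, rfl⟩
  · exact absurd hl hP
  · exact hl

theorem expands_of_expands_add_line {p m : M} {g : Multiset (Gen M)} (l : Line M)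
    (h : Expands p (m, g + line l)) : Expands p (m + value l, g) := by
  obtain ⟨e, k, t⟩ := l
  obtain ⟨P, hg, hp⟩ := h
  dsimp only at hg hp
  by_cases hl : (e, k, t) ∈ P
  · obtain ⟨Q, rfl⟩ := Multiset.exists_cons_of_mem hl
    rw [Multiset.cons_bind, add_comm] at hg
    rw [Multiset.map_cons, Multiset.sum_cons, ← add_assoc] at hp
    exact ⟨Q, add_left_cancel hg, hp⟩
  -- Both columns crossing the line `(e, k, t)` occur in `P`; trade them for `(e, k, t)` and
  -- the parallel line `(e, k, !t)`.
  · have hcross : ∀ s, (e, !k, s) ∈ P := fun s => mem_of_cell_mem_bind_line hl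
      (hg ▸ Multiset.mem_add.2 (Or.inr (mem_line.2 ⟨rfl, cell_mem_cells k t s⟩)))
    obtain ⟨P₁, rfl⟩ := Multiset.exists_cons_of_mem (hcross false)
    obtain ⟨Q, rfl⟩ := Multiset.exists_cons_of_mem
      ((Multiset.mem_cons.1 (hcross true)).resolve_left (by simp))
    refine ⟨(e, k, !t) ::ₘ Q, ?_, ?_⟩
    · rw [Multiset.cons_bind, Multiset.cons_bind, ← add_assoc, ← line_add_line_not, add_comm,
        add_assoc] at hg
      rw [Multiset.cons_bind]
      exact add_left_cancel hg
    · rw [hp]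
      simp only [Multiset.map_cons, Multiset.sum_cons]
      rw [← add_assoc (value _), ← value_add_value_not, add_assoc, add_assoc]

theorem expands_add_line_iff {p m : M} {g : Multiset (Gen M)} (l : Line M) :
    Expands p (m, g + line l) ↔ Expands p (m + value l, g) := by
  refine ⟨expands_of_expands_add_line l, fun ⟨P, hg, hp⟩ => ⟨l ::ₘ P, ?_, ?_⟩⟩
  · rw [Multiset.cons_bind, add_comm, ← hg]
  · rw [Multiset.map_cons, Multiset.sum_cons, ← add_assoc, hp]

variable (M) in
def expandsCon : AddCon (M × Multiset (Gen M)) where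
  r u v := ∀ p w, Expands p (u + w) ↔ Expands p (v + w)
  iseqv := ⟨fun _ _ _ => Iff.rfl, fun h p w => (h p w).symm,
    fun h₁ h₂ p w => (h₁ p w).trans (h₂ p w)⟩
  add' {u v u' v'} h h' p w := by
    rw [add_assoc, h p, add_left_comm, h' p, add_left_comm, ← add_assoc]

theorem extCon_le_expandsCon : extCon M ≤ expandsCon M := by
  refine AddCon.addConGen_le.2 fun u v huv p w => ?_
  obtain ⟨l⟩ := huv
  obtain ⟨m, g⟩ := w
  have hu : ((value l, 0) + (m, g) : M × Multiset (Gen M)) = (m + value l, g) :=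
    Prod.ext (add_comm _ _) (zero_add g)
  have hv : ((0, line l) + (m, g) : M × Multiset (Gen M)) = (m, g + line l) :=
    Prod.ext (zero_add m) (add_comm _ _)
  rw [hu, hv, expands_add_line_iff]

theorem expands_iff_of_mk'_eq {u v : M × Multiset (Gen M)}
    (h : (extCon M).mk' u = (extCon M).mk' v) (p : M) : Expands p u ↔ Expands p v := by
  simpa only [add_zero] using extCon_le_expandsCon ((extCon M).eq.1 h) p 0

theorem of_injective : Function.Injective (of M) := fun _ y h =>
  (eq_of_expands_zero ((expands_iff_of_mk'_eq h y).2 (expands_self y))).symm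

theorem algLE_of_algLE_of {x y : M} (h : AlgLE (of M x) (of M y)) : AlgLE x y := by
  obtain ⟨z, hz⟩ := h
  obtain ⟨u, rfl⟩ := (extCon M).mk'_surjective z
  rw [of, AddMonoidHom.comp_apply, AddMonoidHom.comp_apply, ← map_add] at hz
  obtain ⟨P, -, hP⟩ := (expands_iff_of_mk'_eq hz y).1 (expands_self y)
  exact ⟨u.1 + (P.map value).sum, hP.trans (add_assoc _ _ _)⟩

theorem isConical (hM : IsConical M) : IsConical (Ext M) := by
  intro α β hαβ
  obtain ⟨u, rfl⟩ := (extCon M).mk'_surjective α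
  obtain ⟨v, rfl⟩ := (extCon M).mk'_surjective β
  rw [← map_add, ← map_zero (extCon M).mk'] at hαβ
  obtain ⟨P, hP₂, hP₁⟩ := (expands_iff_of_mk'_eq hαβ 0).2 (expands_self 0)
  obtain rfl : P = 0 := by
    refine Multiset.eq_zero_of_forall_notMem fun l hl => ?_
    obtain ⟨Q, rfl⟩ := Multiset.exists_cons_of_mem hl
    rw [Multiset.map_cons, Multiset.sum_cons] at hP₁
    exact l.1.2.2 _ _ (hM _ _ (hM _ _ hP₁.symm).2).1
  simp only [Multiset.zero_bind, Multiset.map_zero, Multiset.sum_zero, add_zero, Prod.fst_add,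
    Prod.snd_add] at hP₁ hP₂
  obtain ⟨hu₁, hv₁⟩ := hM _ _ hP₁.symm
  obtain ⟨hu₂, hv₂⟩ := add_eq_zero.1 hP₂
  obtain rfl : u = 0 := Prod.ext hu₁ hu₂
  obtain rfl : v = 0 := Prod.ext hv₁ hv₂
  exact ⟨map_zero _, map_zero _⟩

theorem of_value (e : NondegEqn M) (k t : Bool) :
    of M (value (e, k, t)) = gen e (cell k t false) + gen e (cell k t true) := by
  have hrel : of M (value (e, k, t)) = (extCon M).mk' (0, line (e, k, t)) :=
    (extCon M).eq.2 (AddConGen.Rel.of _ _ (ExtRel.line (e, k, t)))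
  rw [hrel, gen, gen, ← map_add]
  congr 1
  exact Prod.ext (zero_add 0).symm (by simp [line, cells, Multiset.singleton_add])

theorem exists_refinement {a b c d : M} (h : a + b = c + d) :
    ∃ x y z w : Ext M,
      of M a = x + y ∧ of M b = z + w ∧ of M c = x + z ∧ of M d = y + w := by
  by_cases h0 : a = 0 ∨ b = 0 ∨ c = 0 ∨ d = 0
  · obtain ⟨x, y, z, w, rfl, rfl, rfl, rfl⟩ := exists_refinement_of_eq_zero h h0
    exact ⟨of M x, of M y, of M z, of M w, map_add .., map_add .., map_add .., map_add ..⟩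
  · push Not at h0
    obtain ⟨ha, hb, hc, hd⟩ := h0
    let e : NondegEqn M := ⟨fun k t => cond k (cond t d c) (cond t b a), h, by
      intro k t; cases k <;> cases t <;> assumption⟩
    exact ⟨gen e (false, false), gen e (false, true), gen e (true, false), gen e (true, true),
      of_value e false false, of_value e false true, of_value e true false, of_value e true true⟩

variable (M : Type u) [AddCommMonoid M]

/-- Each level is bundled with its monoid structure so that the recursion can produce both. -/
def tower : ℕ → Σ α : Type u, AddCommMonoid α
  | 0 => ⟨M, inferInstance⟩
  | n + 1 => letI := (tower n).2; ⟨Ext (tower n).1, inferInstance⟩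

abbrev Tower (n : ℕ) : Type u := (tower M n).1

instance (n : ℕ) : AddCommMonoid (Tower M n) := (tower M n).2

instance instCountableTower [Countable M] : ∀ n, Countable (Tower M n)
  | 0 => inferInstanceAs (Countable M)
  | n + 1 => have := instCountableTower n; inferInstanceAs (Countable (Ext (Tower M n)))

theorem isConical_tower (hM : IsConical M) : ∀ n, IsConical (Tower M n)
  | 0 => hM
  | n + 1 => isConical (isConical_tower hM n)

def towerStep (n : ℕ) : Tower M n →+ Tower M (n + 1) := of (Tower M n)

def towerMap (m n : ℕ) (h : m ≤ n) : Tower M m →+ Tower M n where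
  toFun := Nat.leRecOn h (towerStep M _)
  map_zero' := by
    induction n, h using Nat.le_induction with
    | base => exact Nat.leRecOn_self 0
    | succ n hmn ih => rw [Nat.leRecOn_succ hmn, ih, map_zero]
  map_add' x y := by
    induction n, h using Nat.le_induction with
    | base => simp only [Nat.leRecOn_self]
    | succ n hmn ih =>
      rw [Nat.leRecOn_succ hmn, Nat.leRecOn_succ hmn, Nat.leRecOn_succ hmn, ih, map_add]

instance : DirectedSystem (Tower M) (towerMap M · · ·) where
  map_self _ x := Nat.leRecOn_self x
  map_map _ _ _ _ _ _ := (Nat.leRecOn_trans _ _ _).symm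

theorem towerMap_succ (n : ℕ) : towerMap M n (n + 1) n.le_succ = towerStep M n :=
  AddMonoidHom.ext fun _ => Nat.leRecOn_succ' _

theorem towerMap_injective (m n : ℕ) (h : m ≤ n) : Function.Injective (towerMap M m n h) :=
  Nat.leRecOn_injective h _ fun k => of_injective (M := Tower M k)

theorem algLE_of_algLE_towerMap (m n : ℕ) (h : m ≤ n) (x y : Tower M m)
    (hxy : AlgLE (towerMap M m n h x) (towerMap M m n h y)) : AlgLE x y := by
  induction n, h using Nat.le_induction with
  | base =>
    simpa only [towerMap, AddMonoidHom.coe_mk, ZeroHom.coe_mk, Nat.leRecOn_self] using hxy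
  | succ n hmn ih =>
    simp only [towerMap, AddMonoidHom.coe_mk, ZeroHom.coe_mk, Nat.leRecOn_succ hmn] at hxy
    exact ih (algLE_of_algLE_of hxy)

theorem exists_refinement_towerMap (i : ℕ) (a b c d : Tower M i) (h : a + b = c + d) :
    ∃ j hij, ∃ x y z w : Tower M j, towerMap M i j hij a = x + y ∧
      towerMap M i j hij b = z + w ∧ towerMap M i j hij c = x + z ∧
      towerMap M i j hij d = y + w :=
  ⟨i + 1, i.le_succ, towerMap_succ M i ▸ exists_refinement (M := Tower M i) h⟩

end RefinementExt

/-- Every countable conical commutative monoid admits an order-embedding into a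
countable conical refinement monoid. -/
theorem statement0 (M : Type) [AddCommMonoid M] [Countable M] (hM : IsConical M) :
    ∃ (N : Type) (instN : AddCommMonoid N), @OrderEmbedsIntoCCRM M _ N instN := by
  refine ⟨DirectLimit (RefinementExt.Tower M) (RefinementExt.towerMap M), inferInstance,
    inferInstance, DirectLimit.isConical (RefinementExt.isConical_tower M hM),
    DirectLimit.isRefinement (RefinementExt.exists_refinement_towerMap M),
    DirectLimit.addMonoidHomOf (RefinementExt.towerMap M) 0, ?_, fun x y => ⟨AlgLE.map _, ?_⟩⟩
  · exact DirectLimit.mk_injective _ (RefinementExt.towerMap_injective M) 0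
  · exact DirectLimit.algLE_of_algLE_addMonoidHomOf (RefinementExt.algLE_of_algLE_towerMap M)
end

section
/- Every primely generated refinement monoid is separative. -/
/-!
Write `a` as a sum of primes. Each such prime `p` lies below `a`, hence below `b + b = a + b`,
hence below `b` since `p` is prime. In a refinement monoid a prime lying below both `a` and `b`
can be cancelled from `a + p = b + p`, so the primes of `a` can be cancelled one at a time
from `a + a = b + a`.
-/

namespace AlgLE

variable {M : Type*} [AddCommMonoid M]

lemma add_right {p a : M} (h : AlgLE p a) (s : M) : AlgLE p (a + s) := by
  obtain ⟨c, rfl⟩ := h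
  exact ⟨c + s, add_assoc p c s⟩

lemma of_mem_sum {p : M} {l : Multiset M} (hp : p ∈ l) : AlgLE p l.sum := by
  obtain ⟨t, rfl⟩ := Multiset.exists_cons_of_mem hp
  exact ⟨t.sum, Multiset.sum_cons p t⟩

end AlgLE

namespace IsRefinement

variable {M : Type*} [AddCommMonoid M]

lemma cancel_prime (href : IsRefinement M) {p a b : M} (hp : IsPrimeElem p)
    (hpa : AlgLE p a) (hpb : AlgLE p b) (h : a + p = b + p) : a = b := by
  obtain ⟨x, y, z, w, ha, hp₁, hb, hp₂⟩ := href a p b p h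
  have of_le_x : AlgLE p x → a = b := by
    rintro ⟨x', hx⟩
    calc a = x' + z + (y + w) := by rw [ha, hx, hp₁]; abel
      _ = b := by rw [← hp₂, hb, hx, hp₁]; abel
  rcases hp.2 x z (hb ▸ hpb) with hx | ⟨z', hz⟩
  · exact of_le_x hx
  rcases hp.2 x y (ha ▸ hpa) with hx | ⟨y', hy⟩
  · exact of_le_x hx
  -- `p` absorbs both `y' + w` and `z' + w`, which forces `y = z`.
  have hpy : p = p + y' + w := by rw [hy] at hp₂; exact hp₂
  have hpz : p = p + z' + w := by rw [hz] at hp₁; exact hp₁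
  have hyz : y = z :=
    calc y = (p + z' + w) + y' := by rw [← hpz, hy]
      _ = (p + y' + w) + z' := by abel
      _ = z := by rw [← hpy, hz]
  rw [ha, hb, hyz]

lemma cancel_sum_primes (href : IsRefinement M) {l : Multiset M}
    (hl : ∀ p ∈ l, IsPrimeElem p) {a b : M} (ha : ∀ p ∈ l, AlgLE p a)
    (hb : ∀ p ∈ l, AlgLE p b) (h : a + l.sum = b + l.sum) : a = b := by
  induction l using Multiset.induction generalizing a b with
  | empty => simpa using h
  | cons p l ih =>
    rw [Multiset.forall_mem_cons] at hl ha hb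
    refine ih hl.2 ha.2 hb.2 (href.cancel_prime hl.1 (ha.1.add_right _) (hb.1.add_right _) ?_)
    rw [Multiset.sum_cons, add_comm p, ← add_assoc, ← add_assoc] at h
    exact h

end IsRefinement

/-- Every primely generated refinement monoid is separative. -/
theorem statement3 (M : Type*) [AddCommMonoid M]
    (hpg : PrimelyGenerated M) (href : IsRefinement M) :
    IsSeparative M := by
  intro a b h1 h2
  obtain ⟨l, hl, rfl⟩ := hpg a
  have below_a : ∀ p ∈ l, AlgLE p l.sum := fun p hp => AlgLE.of_mem_sum hp
  have below_b : ∀ p ∈ l, AlgLE p b := by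
    intro p hp
    have hbb : AlgLE p (b + b) := h2 ▸ (below_a p hp).add_right b
    exact ((hl p hp).2 b b hbb).elim id id
  exact href.cancel_sum_primes hl below_a below_b (h1.trans (add_comm _ _))
end

section
/- For every row-finite quiver E, the graph monoid M(E) is a conical refinement monoid. -/
/-- A row-finite quiver: vertex set `V`, edge set `E`, source and range maps,
with each vertex emitting only finitely many edges. -/
structure RowFiniteQuiver where
  V : Type
  E : Type
  s : E → V
  r : E → V
  rowFinite : ∀ v : V, {e : E | s e = v}.Finite

/-- The defining relations of the graph monoid: each vertex `v` emitting at least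
one edge is identified with `Σ_{s(e) = v} r(e)`.  (The free commutative monoid on
`V` is the monoid `Multiset V`.) -/
def graphRel (Q : RowFiniteQuiver) : Multiset Q.V → Multiset Q.V → Prop :=
  fun x y => ∃ v : Q.V, (∃ e : Q.E, Q.s e = v) ∧ x = {v} ∧
    y = (Q.rowFinite v).toFinset.val.map Q.r

/-- The graph monoid `M(E)`: quotient of the free commutative monoid on the
vertices by the smallest monoid congruence containing the graph relations. -/
abbrev GraphMonoid (Q : RowFiniteQuiver) := (addConGen (graphRel Q)).Quotient

/-!
`M(E)` is presented by the rewriting rules `v ↦ Σ_{s(e)=v} r(e)` on multisets of vertices, one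
rule for each vertex that is not a sink. The rules are confluent: two rewrites at different
vertices commute, and a vertex has only one rule. Hence two multisets are identified in `M(E)`
exactly when they have a common descendant. A rewriting sequence starting from a sum splits into
rewriting sequences of the summands, so an equality `a + b = c + d` in `M(E)` lifts to an
equality of multisets, which refines in the free commutative monoid. No rule produces the empty
multiset, so only `0` represents `0`, which gives conicality.
-/

open Relation

theorem Multiset.isRefinement (α : Type*) : IsRefinement (Multiset α) := by
  classical
  intro a b c d h
  refine ⟨a ∩ c, a - c, c - a, b - (c - a), ?_, ?_, ?_, ?_⟩ <;>
  · ext v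
    have := congrArg (Multiset.count v) h
    simp only [Multiset.count_add, Multiset.count_sub, Multiset.count_inter] at *
    omega

namespace AddCon

variable {M : Type*} [AddCommMonoid M]

theorem isConical_quotient (hM : IsConical M) (c : AddCon M) (hc : ∀ a, c a 0 → a = 0) :
    IsConical c.Quotient := by
  refine fun x y => AddCon.induction_on₂ x y fun m n h => ?_
  have hmn := hM m n (hc _ ((c.eq (a := m + n) (b := 0)).1 h))
  exact ⟨congrArg _ hmn.1, congrArg _ hmn.2⟩

theorem isRefinement_quotient (hM : IsRefinement M) (c : AddCon M) (R : M → M → Prop)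
    (hc : ∀ a b, c a b ↔ Join (ReflTransGen R) a b)
    (hsplit : ∀ {a b e}, ReflTransGen R (a + b) e →
      ∃ a' b', ReflTransGen R a a' ∧ ReflTransGen R b b' ∧ e = a' + b') :
    IsRefinement c.Quotient := by
  have hreduce : ∀ {a a'}, ReflTransGen R a a' → (a : c.Quotient) = a' :=
    fun h => (c.eq).2 ((hc _ _).2 ⟨_, h, .refl⟩)
  intro a b a₁ b₁
  refine AddCon.induction_on₂ a b fun m n => AddCon.induction_on₂ a₁ b₁ fun p q h => ?_
  obtain ⟨e, hmn, hpq⟩ := (hc _ _).1 ((c.eq (a := m + n) (b := p + q)).1 h)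
  obtain ⟨m', n', hm, hn, rfl⟩ := hsplit hmn
  obtain ⟨p', q', hp, hq, he⟩ := hsplit hpq
  obtain ⟨x, y, z, w, rfl, rfl, rfl, rfl⟩ := hM m' n' p' q' he
  exact ⟨x, y, z, w, hreduce hm, hreduce hn, hreduce hp, hreduce hq⟩

end AddCon

namespace Multiset

variable {α : Type*} (P : α → Prop) (ρ : α → Multiset α)

def ExpandRel (x y : Multiset α) : Prop := ∃ v, P v ∧ x = {v} ∧ y = ρ v

def ExpandStep (x y : Multiset α) : Prop := ∃ v z, P v ∧ x = v ::ₘ z ∧ y = ρ v + z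

variable {P ρ}

theorem ExpandStep.add_right {x y : Multiset α} (h : ExpandStep P ρ x y) (w : Multiset α) :
    ExpandStep P ρ (x + w) (y + w) := by
  obtain ⟨v, z, hv, rfl, rfl⟩ := h
  exact ⟨v, z + w, hv, cons_add v z w, add_assoc _ _ _⟩

theorem reflTransGen_expandStep_add {a b c d : Multiset α}
    (hab : ReflTransGen (ExpandStep P ρ) a b) (hcd : ReflTransGen (ExpandStep P ρ) c d) :
    ReflTransGen (ExpandStep P ρ) (a + c) (b + d) := by
  have hleft : ∀ {a b : Multiset α} (w : Multiset α), ReflTransGen (ExpandStep P ρ) a b →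
      ReflTransGen (ExpandStep P ρ) (a + w) (b + w) := fun w h =>
    h.lift (· + w) fun _ _ hs => hs.add_right w
  exact (hleft c hab).trans (by simpa only [add_comm b] using hleft b hcd)

theorem expandStep_diamond (a b c : Multiset α) (hab : ExpandStep P ρ a b)
    (hac : ExpandStep P ρ a c) :
    ∃ d, ReflGen (ExpandStep P ρ) b d ∧ ReflTransGen (ExpandStep P ρ) c d := by
  obtain ⟨v, p, hv, rfl, rfl⟩ := hab
  obtain ⟨w, q, hw, hvp, rfl⟩ := hac
  rcases cons_eq_cons.1 hvp with ⟨rfl, rfl⟩ | ⟨-, u, rfl, rfl⟩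
  · exact ⟨_, .refl, .refl⟩
  · refine ⟨ρ v + ρ w + u, .single ⟨w, ρ v + u, hw, ?_, ?_⟩, .single ⟨v, ρ w + u, hv, ?_, ?_⟩⟩ <;>
      simp only [add_cons, add_comm, add_left_comm]

def expandCon (P : α → Prop) (ρ : α → Multiset α) : AddCon (Multiset α) where
  r := Join (ReflTransGen (ExpandStep P ρ))
  iseqv := equivalence_join_reflTransGen expandStep_diamond
  add' := fun ⟨e, hae, hbe⟩ ⟨f, hcf, hdf⟩ =>
    ⟨e + f, reflTransGen_expandStep_add hae hcf, reflTransGen_expandStep_add hbe hdf⟩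

theorem addConGen_expandRel : addConGen (ExpandRel P ρ) = expandCon P ρ := by
  refine le_antisymm (AddCon.addConGen_le.2 ?_) ?_
  · rintro x y ⟨v, hv, rfl, rfl⟩
    exact ⟨ρ v, .single ⟨v, 0, hv, rfl, (add_zero _).symm⟩, .refl⟩
  · have hstep : ExpandStep P ρ ≤ addConGen (ExpandRel P ρ) := by
      rintro x y ⟨v, z, hv, rfl, rfl⟩
      rw [← singleton_add]
      exact (addConGen (ExpandRel P ρ)).add (.of _ _ ⟨v, hv, rfl, rfl⟩) (.refl _)
    refine join_le_of_equivalence_of_le (addConGen (ExpandRel P ρ)).iseqv fun a b h => ?_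
    induction h with
    | refl => exact (addConGen (ExpandRel P ρ)).refl _
    | tail _ hs ih => exact (addConGen (ExpandRel P ρ)).trans ih (hstep _ _ hs)

theorem exists_reflTransGen_expandStep_of_add {a b e : Multiset α}
    (h : ReflTransGen (ExpandStep P ρ) (a + b) e) :
    ∃ a' b', ReflTransGen (ExpandStep P ρ) a a' ∧ ReflTransGen (ExpandStep P ρ) b b' ∧
      e = a' + b' := by
  induction h with
  | refl => exact ⟨a, b, .refl, .refl, rfl⟩
  | tail _ hs ih =>
    obtain ⟨a', b', ha, hb, rfl⟩ := ih
    obtain ⟨v, z, hv, hvz, rfl⟩ := hs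
    have hmem : v ∈ a' + b' := by rw [hvz]; exact mem_cons_self v z
    rcases mem_add.1 hmem with hmem | hmem
    · obtain ⟨u, rfl⟩ := exists_cons_of_mem hmem
      rw [cons_add, cons_inj_right] at hvz
      exact ⟨ρ v + u, b', ha.tail ⟨v, u, hv, rfl, rfl⟩, hb, by rw [← hvz, add_assoc]⟩
    · obtain ⟨u, rfl⟩ := exists_cons_of_mem hmem
      rw [add_cons, cons_inj_right] at hvz
      exact ⟨a', ρ v + u, ha, hb.tail ⟨v, u, hv, rfl, rfl⟩, by rw [← hvz, add_left_comm]⟩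

theorem eq_zero_of_expandCon_zero (hρ : ∀ v, P v → ρ v ≠ 0) {a : Multiset α}
    (h : expandCon P ρ a 0) : a = 0 := by
  obtain ⟨e, hae, h0e⟩ := h
  have he : e = 0 := by
    clear hae
    induction h0e with
    | refl => rfl
    | tail _ hs ih =>
      obtain ⟨v, z, -, hvz, -⟩ := hs
      exact absurd (ih ▸ hvz) zero_ne_cons
  subst he
  cases hae.cases_tail with
  | inl ha => exact ha.symm
  | inr hstep =>
    obtain ⟨_, -, v, z, hv, -, hz⟩ := hstep
    exact absurd (add_eq_zero.1 hz.symm).1 (hρ v hv)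

end Multiset

namespace RowFiniteQuiver

theorem map_range_ne_zero (Q : RowFiniteQuiver) {v : Q.V} (hv : ∃ e : Q.E, Q.s e = v) :
    (Q.rowFinite v).toFinset.val.map Q.r ≠ 0 := by
  obtain ⟨e, he⟩ := hv
  exact ne_of_mem_of_not_mem'
    (Multiset.mem_map_of_mem _ ((Set.Finite.mem_toFinset _).2 he : e ∈ (Q.rowFinite v).toFinset))
    (Multiset.notMem_zero _)

end RowFiniteQuiver

/-- For every row-finite quiver, the graph monoid is a conical refinement monoid. -/
theorem statement4 (Q : RowFiniteQuiver) :
    IsConical (GraphMonoid Q) ∧ IsRefinement (GraphMonoid Q) := by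
  have hgen : addConGen (graphRel Q) = Multiset.expandCon (fun v => ∃ e, Q.s e = v)
      (fun v => (Q.rowFinite v).toFinset.val.map Q.r) :=
    Multiset.addConGen_expandRel
  refine ⟨AddCon.isConical_quotient (fun _ _ => add_eq_zero.1) _ fun a ha => ?_,
    AddCon.isRefinement_quotient (Multiset.isRefinement Q.V) _ _ (fun a b => by rw [hgen]; rfl)
      Multiset.exists_reflTransGen_expandStep_of_add⟩
  rw [hgen] at ha
  exact Multiset.eq_zero_of_expandCon_zero (fun v => Q.map_range_ne_zero) ha
end

section
/- For every row-finite quiver E, the graph monoid M(E) is separative. -/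
/-!
The graph monoid is the quotient of the free commutative monoid `Multiset V` by the rewriting
system that replaces a vertex `v` emitting edges by `Σ_{s(e) = v} r(e)`. This system is confluent
(rewrites of distinct letters commute), so two multisets are identified iff they have a common
reduct; in particular the quotient is a refinement monoid. A given separativity relation involves
only finitely many rewrites, so it holds in the monoid of a subsystem in which only finitely many
letters can be rewritten. There, every element below `[n]` has a representative whose letters lie in
the finite set of letters of `n` and of the right-hand sides, so by Dickson's lemma the algebraic
order is well-founded. A refinement monoid with well-founded algebraic order is primely generated,
and in a primely generated refinement monoid separativity follows by cancelling the primes of `a`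
one at a time from `a + a = b + a`.
-/

open Relation

section AlgebraicOrder

variable {M : Type*} [AddCommMonoid M]

theorem AlgLE.refl (x : M) : AlgLE x x := ⟨0, (add_zero x).symm⟩

theorem AlgLE.trans {x y z : M} (hxy : AlgLE x y) (hyz : AlgLE y z) : AlgLE x z := by
  obtain ⟨u, rfl⟩ := hxy
  obtain ⟨v, rfl⟩ := hyz
  exact ⟨u + v, add_assoc x u v⟩

instance : IsPreorder M AlgLE where
  refl := AlgLE.refl
  trans _ _ _ := AlgLE.trans

theorem AlgLE.add_right_s5 {x y : M} (h : AlgLE x y) (z : M) : AlgLE x (y + z) := by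
  obtain ⟨u, rfl⟩ := h
  exact ⟨u + z, add_assoc x u z⟩

theorem AlgLE.add_eq_self {p s e : M} (hps : AlgLE p s) (he : p + e = p) : s + e = s := by
  obtain ⟨t, rfl⟩ := hps
  rw [add_right_comm, he]

theorem IsPrimeElem.algLE_or_of_eq_add {p x y : M} (hp : IsPrimeElem p) (h : p = x + y) :
    AlgLE p x ∨ AlgLE p y :=
  hp.2 x y (h ▸ AlgLE.refl p)

/-- Refining `p + a = p + b` as `p = x + y = x + z`, `a = z + w`, `b = y + w`, primality of `p`
produces `e` and `f` absorbed by `p` with `a + e = b + f`; since `p ≤ a` and `p ≤ b` they are also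
absorbed by `a` and `b`. -/
theorem IsPrimeElem.add_left_cancel (hr : IsRefinement M) {p a b : M} (hp : IsPrimeElem p)
    (h : p + a = p + b) (ha : AlgLE p a) (hb : AlgLE p b) : a = b := by
  obtain ⟨x, y, z, w, hpxy, rfl, hpxz, rfl⟩ := hr p a p b h
  suffices ∃ e f, p + e = p ∧ p + f = p ∧ z + w + e = y + w + f by
    obtain ⟨e, f, he, hf, hef⟩ := this
    rw [← ha.add_eq_self he, hef, hb.add_eq_self hf]
  by_cases hx : AlgLE p x
  · obtain ⟨x', rfl⟩ := hx
    exact ⟨x' + y, x' + z, (add_assoc p x' y).symm.trans hpxy.symm,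
      (add_assoc p x' z).symm.trans hpxz.symm, by abel⟩
  · obtain ⟨y', rfl⟩ := (hp.algLE_or_of_eq_add hpxy).resolve_left hx
    obtain ⟨z', rfl⟩ := (hp.algLE_or_of_eq_add hpxz).resolve_left hx
    exact ⟨x + y', x + z', (add_left_comm p x y').trans hpxy.symm,
      (add_left_comm p x z').trans hpxz.symm, by abel⟩

theorem eq_of_add_sum_eq_add_sum (hr : IsRefinement M) {a b : M} (l : Multiset M)
    (hl : ∀ p ∈ l, IsPrimeElem p ∧ AlgLE p a ∧ AlgLE p b) (h : a + l.sum = b + l.sum) :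
    a = b := by
  induction l using Multiset.induction with
  | empty => simpa using h
  | cons p l ih =>
    obtain ⟨hp, ha, hb⟩ := hl p (Multiset.mem_cons_self p l)
    refine ih (fun q hq => hl q (Multiset.mem_cons_of_mem hq))
      (hp.add_left_cancel hr ?_ (ha.add_right_s5 _) (hb.add_right_s5 _))
    rwa [Multiset.sum_cons, add_left_comm a, add_left_comm b] at h

theorem isSeparative_of_primelyGenerated (hr : IsRefinement M) (hpg : PrimelyGenerated M) :
    IsSeparative M := by
  intro a b haa hbb
  obtain ⟨l, hl, rfl⟩ := hpg a
  refine eq_of_add_sum_eq_add_sum hr l (fun p hp => ?_) (by rw [haa, add_comm])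
  obtain ⟨t, rfl⟩ := Multiset.exists_cons_of_mem hp
  have hpa : AlgLE p (p ::ₘ t).sum := ⟨t.sum, Multiset.sum_cons p t⟩
  have hpbb : AlgLE p (b + b) := hbb ▸ hpa.add_right_s5 b
  exact ⟨hl p hp, hpa, ((hl p hp).2 b b hpbb).elim id id⟩

theorem primelyGenerated_of_wellFounded (hr : IsRefinement M)
    (hwf : WellFounded fun x y : M => AlgLE x y ∧ ¬AlgLE y x) : PrimelyGenerated M := by
  intro x
  induction x using hwf.induction with
  | _ x ih =>
  by_cases hx : IsPrimeElem x
  · exact ⟨{x}, by simpa using hx, by simp⟩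
  by_cases h0 : x = 0
  · exact ⟨0, by simp, by simp [h0]⟩
  obtain ⟨u, v, ⟨c, hc⟩, hxu, hxv⟩ : ∃ u v, AlgLE x (u + v) ∧ ¬AlgLE x u ∧ ¬AlgLE x v := by
    simpa [IsPrimeElem, h0] using hx
  obtain ⟨a₁, a₂, b₁, b₂, rfl, rfl, rfl, -⟩ := hr u v x c hc
  obtain ⟨l₁, hl₁, rfl⟩ := ih a₁ ⟨⟨b₁, rfl⟩, fun h => hxu (h.trans ⟨a₂, rfl⟩)⟩
  obtain ⟨l₂, hl₂, rfl⟩ := ih b₁ ⟨⟨l₁.sum, add_comm _ _⟩, fun h => hxv (h.trans ⟨b₂, rfl⟩)⟩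
  exact ⟨l₁ + l₂, fun p hp => (Multiset.mem_add.1 hp).elim (hl₁ p) (hl₂ p),
    (Multiset.sum_add _ _).symm⟩

end AlgebraicOrder

theorem Multiset.exists_refinement_of_add_eq_add {V : Type*} {a b c d : Multiset V}
    (h : a + b = c + d) :
    ∃ x y z w : Multiset V, a = x + y ∧ b = z + w ∧ c = x + z ∧ d = y + w := by
  classical
  refine ⟨a ∩ c, a - c, c - a, b - (c - a), ?_, ?_, ?_, ?_⟩ <;>
  · ext e
    have hc := congrArg (Multiset.count e) h
    simp only [Multiset.count_add] at hc
    simp only [Multiset.count_add, Multiset.count_sub, Multiset.count_inter]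
    omega

namespace MultisetRewriting

variable {V : Type*}

/-- `ρ v = some R` allows to rewrite the letter `v` to `R`; `ρ v = none` means `v` is not
rewritten. -/
def Step (ρ : V → Option (Multiset V)) (x y : Multiset V) : Prop :=
  ∃ v R m, ρ v = some R ∧ x = v ::ₘ m ∧ y = m + R

abbrev Reduces (ρ : V → Option (Multiset V)) : Multiset V → Multiset V → Prop :=
  ReflTransGen (Step ρ)

variable {ρ : V → Option (Multiset V)}

theorem Step.add_right_s5 {x y : Multiset V} (h : Step ρ x y) (z : Multiset V) :
    Step ρ (x + z) (y + z) := by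
  obtain ⟨v, R, m, hv, rfl, rfl⟩ := h
  exact ⟨v, R, m + z, hv, Multiset.cons_add v m z, add_right_comm m R z⟩

theorem Reduces.add_right_s5 {x y : Multiset V} (h : Reduces ρ x y) (z : Multiset V) :
    Reduces ρ (x + z) (y + z) := by
  induction h with
  | refl => exact .refl
  | tail _ hs ih => exact ih.tail (hs.add_right_s5 z)

theorem Reduces.add {x y u w : Multiset V} (h : Reduces ρ x y) (h' : Reduces ρ u w) :
    Reduces ρ (x + u) (y + w) := by
  refine (h.add_right_s5 u).trans ?_
  rw [add_comm y u, add_comm y w]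
  exact h'.add_right_s5 y

theorem Step.diamond {a b c : Multiset V} (hb : Step ρ a b) (hc : Step ρ a c) :
    ∃ d, ReflGen (Step ρ) b d ∧ Reduces ρ c d := by
  obtain ⟨v, R, m, hv, rfl, rfl⟩ := hb
  obtain ⟨v', R', m', hv', he, rfl⟩ := hc
  rcases Multiset.cons_eq_cons.1 he with ⟨rfl, rfl⟩ | ⟨-, u, rfl, rfl⟩
  · rw [hv] at hv'
    cases hv'
    exact ⟨m + R, .refl, .refl⟩
  · refine ⟨u + R + R', .single ?_, .single ?_⟩
    · exact ⟨v', R', u + R, hv', Multiset.cons_add v' u R, rfl⟩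
    · exact ⟨v, R, u + R', hv, Multiset.cons_add v u R', add_right_comm u R R'⟩

def reductionCon (ρ : V → Option (Multiset V)) : AddCon (Multiset V) where
  r := Join (Reduces ρ)
  iseqv := equivalence_join_reflTransGen fun _ _ _ => Step.diamond
  add' := by
    rintro w x y z ⟨c, hw, hx⟩ ⟨d, hy, hz⟩
    exact ⟨c + d, hw.add hy, hx.add hz⟩

theorem reductionCon_le {c : AddCon (Multiset V)} (h : ∀ v R, ρ v = some R → c {v} R) :
    reductionCon ρ ≤ c := by
  have hred : ∀ {x y}, Reduces ρ x y → c x y := by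
    intro x y hxy
    induction hxy with
    | refl => exact c.refl _
    | tail _ hs ih =>
      obtain ⟨v, R, m, hv, rfl, rfl⟩ := hs
      have hstep := c.add (h v R hv) (c.refl m)
      rw [Multiset.singleton_add, add_comm R m] at hstep
      exact c.trans ih hstep
  rintro x y ⟨z, hxz, hyz⟩
  exact c.trans (hred hxz) (c.symm (hred hyz))

theorem reductionCon_of_eq_some {v : V} {R : Multiset V} (h : ρ v = some R) :
    reductionCon ρ {v} R :=
  ⟨R, .single ⟨v, R, 0, h, rfl, (zero_add R).symm⟩, .refl⟩

theorem mk_eq_mk_of_reduces {x y : Multiset V} (h : Reduces ρ x y) :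
    (x : (reductionCon ρ).Quotient) = y :=
  (AddCon.eq _).2 ⟨y, h, .refl⟩

theorem Reduces.exists_add_of_add {a b c : Multiset V} (h : Reduces ρ (a + b) c) :
    ∃ a' b', Reduces ρ a a' ∧ Reduces ρ b b' ∧ c = a' + b' := by
  induction h with
  | refl => exact ⟨a, b, .refl, .refl, rfl⟩
  | tail _ hs ih =>
    obtain ⟨a', b', ha, hb, rfl⟩ := ih
    obtain ⟨v, R, m, hv, he, rfl⟩ := hs
    rcases Multiset.mem_add.1 (he ▸ Multiset.mem_cons_self v m) with hva | hvb
    · obtain ⟨t, rfl⟩ := Multiset.exists_cons_of_mem hva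
      rw [Multiset.cons_add, Multiset.cons_inj_right] at he
      exact ⟨t + R, b', ha.tail ⟨v, R, t, hv, rfl, rfl⟩, hb, by rw [← he, add_right_comm]⟩
    · obtain ⟨t, rfl⟩ := Multiset.exists_cons_of_mem hvb
      rw [Multiset.add_cons, Multiset.cons_inj_right] at he
      exact ⟨a', t + R, ha, hb.tail ⟨v, R, t, hv, rfl, rfl⟩, by rw [← he, add_assoc]⟩

theorem isRefinement_reductionCon : IsRefinement (reductionCon ρ).Quotient := by
  intro a b c d h
  induction a using AddCon.induction_on with | H a =>
  induction b using AddCon.induction_on with | H b =>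
  induction c using AddCon.induction_on with | H c =>
  induction d using AddCon.induction_on with | H d =>
  rw [← AddCon.coe_add, ← AddCon.coe_add, AddCon.eq] at h
  obtain ⟨e, hab, hcd⟩ := h
  obtain ⟨a', b', ha, hb, rfl⟩ := hab.exists_add_of_add
  obtain ⟨c', d', hc, hd, he⟩ := hcd.exists_add_of_add
  obtain ⟨x, y, z, w, rfl, rfl, rfl, rfl⟩ := Multiset.exists_refinement_of_add_eq_add he
  exact ⟨x, y, z, w, mk_eq_mk_of_reduces ha, mk_eq_mk_of_reduces hb, mk_eq_mk_of_reduces hc,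
    mk_eq_mk_of_reduces hd⟩

theorem mk_algLE_mk_of_le {x y : Multiset V} (h : x ≤ y) :
    AlgLE (x : (reductionCon ρ).Quotient) y := by
  obtain ⟨t, rfl⟩ := Multiset.le_iff_exists_add.1 h
  exact ⟨t, rfl⟩

def reductLetters (ρ : V → Option (Multiset V)) (n : Multiset V) : Set V :=
  {u | u ∈ n ∨ ∃ v R, ρ v = some R ∧ u ∈ R}

theorem finite_reductLetters (hρ : {v | (ρ v).isSome}.Finite) (n : Multiset V) :
    (reductLetters ρ n).Finite := by
  refine (n.finite_toSet.union (hρ.biUnion fun v _ => ((ρ v).getD 0).finite_toSet)).subset ?_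
  rintro u (hu | ⟨v, R, hv, hu⟩)
  · exact Or.inl hu
  · exact Or.inr (Set.mem_biUnion (x := v) (by simp [hv]) (by simpa [hv] using hu))

theorem Reduces.subset_reductLetters {n x : Multiset V} (h : Reduces ρ n x) :
    ∀ u ∈ x, u ∈ reductLetters ρ n := by
  induction h with
  | refl => exact fun u hu => Or.inl hu
  | tail _ hs ih =>
    obtain ⟨v, R, m, hv, rfl, rfl⟩ := hs
    intro u hu
    rcases Multiset.mem_add.1 hu with hm | hR
    · exact ih u (Multiset.mem_cons_of_mem hm)
    · exact Or.inr ⟨v, R, hv, hR⟩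

theorem exists_mk_eq_of_algLE {n : Multiset V} {x : (reductionCon ρ).Quotient}
    (h : AlgLE x n) : ∃ m : Multiset V, (∀ u ∈ m, u ∈ reductLetters ρ n) ∧ (m : _) = x := by
  induction x using AddCon.induction_on with | H a =>
  obtain ⟨z, hz⟩ := h
  induction z using AddCon.induction_on with | H d =>
  rw [← AddCon.coe_add, AddCon.eq] at hz
  obtain ⟨e, hne, hade⟩ := hz
  obtain ⟨a', d', ha, -, rfl⟩ := hade.exists_add_of_add
  exact ⟨a', fun u hu => hne.subset_reductLetters u (Multiset.mem_add.2 (Or.inl hu)),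
    (mk_eq_mk_of_reduces ha).symm⟩

theorem isPWO_setOf_forall_mem {T : Set V} (hT : T.Finite) :
    {m : Multiset V | ∀ u ∈ m, u ∈ T}.IsPWO := by
  classical
  have : Finite T := hT.to_subtype
  have : WellQuasiOrderedLE (Multiset T) :=
    (Finsupp.orderIsoMultiset (ι := T)).wellQuasiOrderedLE_iff.1 inferInstance
  refine ((Set.isPWO_of_wellQuasiOrderedLE Set.univ).image_of_monotone_on
    (f := Multiset.map ((↑) : T → V)) fun _ _ _ _ h => Multiset.map_le_map h).mono ?_
  intro m hm
  lift m to Multiset T using hm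
  exact ⟨m, trivial, rfl⟩

theorem wellFounded_algLT (hρ : {v | (ρ v).isSome}.Finite) :
    WellFounded fun x y : (reductionCon ρ).Quotient => AlgLE x y ∧ ¬AlgLE y x := by
  refine ⟨fun x => ?_⟩
  induction x using AddCon.induction_on with | H n =>
  have hpwo : {y | AlgLE y (n : (reductionCon ρ).Quotient)}.PartiallyWellOrderedOn AlgLE := by
    refine ((isPWO_setOf_forall_mem (finite_reductLetters hρ n)).image_of_monotone_on
      (f := ((↑) : Multiset V → (reductionCon ρ).Quotient))
      fun _ _ _ _ h => mk_algLE_mk_of_le h).mono fun y hy => ?_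
    obtain ⟨m, hm, rfl⟩ := exists_mk_eq_of_algLE hy
    exact ⟨m, hm, rfl⟩
  refine (Set.WellFoundedOn.acc_iff_wellFoundedOn.out 1 0).1
    (hpwo.wellFoundedOn.subset fun y hy => ?_)
  rw [← reflTransGen_eq_self (r := AlgLE)]
  exact ReflTransGen.mono (fun _ _ h => h.1) _ _ hy

theorem Step.mono {ρ' : V → Option (Multiset V)} (hρ : ∀ v R, ρ' v = some R → ρ v = some R)
    {x y : Multiset V} (h : Step ρ' x y) : Step ρ x y := by
  obtain ⟨v, R, m, hv, hx, hy⟩ := h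
  exact ⟨v, R, m, hρ v R hv, hx, hy⟩

theorem Reduces.mono {ρ' : V → Option (Multiset V)} (hρ : ∀ v R, ρ' v = some R → ρ v = some R)
    {x y : Multiset V} (h : Reduces ρ' x y) : Reduces ρ x y :=
  ReflTransGen.mono (fun _ _ => Step.mono hρ) _ _ h

theorem reductionCon_mono {ρ' : V → Option (Multiset V)}
    (hρ : ∀ v R, ρ' v = some R → ρ v = some R) : reductionCon ρ' ≤ reductionCon ρ :=
  fun _ _ ⟨z, hxz, hyz⟩ => ⟨z, hxz.mono hρ, hyz.mono hρ⟩

open scoped Classical in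
noncomputable def restrict (ρ : V → Option (Multiset V)) (W : Finset V) :
    V → Option (Multiset V) :=
  fun v => if v ∈ W then ρ v else none

theorem restrict_eq_some {W : Finset V} {v : V} {R : Multiset V} (h : restrict ρ W v = some R) :
    v ∈ W ∧ ρ v = some R := by
  by_cases hv : v ∈ W
  · simpa [restrict, hv] using h
  · simp [restrict, hv] at h

theorem finite_restrict_isSome (W : Finset V) : {v | (restrict ρ W v).isSome}.Finite :=
  W.finite_toSet.subset fun _ hv => (restrict_eq_some (Option.get_mem hv)).1

theorem restrict_mono {W W' : Finset V} (hW : W ⊆ W') :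
    ∀ v R, restrict ρ W v = some R → restrict ρ W' v = some R := fun v R h => by
  obtain ⟨hv, hR⟩ := restrict_eq_some h
  simp [restrict, hW hv, hR]

theorem Reduces.exists_restrict {x y : Multiset V} (h : Reduces ρ x y) :
    ∃ W : Finset V, Reduces (restrict ρ W) x y := by
  classical
  induction h with
  | refl => exact ⟨∅, .refl⟩
  | tail _ hs ih =>
    obtain ⟨W, hW⟩ := ih
    obtain ⟨v, R, m, hv, hx, hy⟩ := hs
    exact ⟨insert v W, (hW.mono (restrict_mono (W.subset_insert v))).tail
      ⟨v, R, m, by simp [restrict, hv], hx, hy⟩⟩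

theorem exists_restrict_of_reductionCon {x y : Multiset V} (h : reductionCon ρ x y) :
    ∃ W : Finset V, reductionCon (restrict ρ W) x y := by
  classical
  obtain ⟨z, hxz, hyz⟩ := h
  obtain ⟨W₁, h₁⟩ := hxz.exists_restrict
  obtain ⟨W₂, h₂⟩ := hyz.exists_restrict
  exact ⟨W₁ ∪ W₂, z, h₁.mono (restrict_mono Finset.subset_union_left),
    h₂.mono (restrict_mono Finset.subset_union_right)⟩

theorem isSeparative_reductionCon (ρ : V → Option (Multiset V)) :
    IsSeparative (reductionCon ρ).Quotient := by
  classical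
  intro a b haa hbb
  induction a using AddCon.induction_on with | H a =>
  induction b using AddCon.induction_on with | H b =>
  simp only [← AddCon.coe_add, AddCon.eq] at haa hbb ⊢
  obtain ⟨W₁, h₁⟩ := exists_restrict_of_reductionCon haa
  obtain ⟨W₂, h₂⟩ := exists_restrict_of_reductionCon hbb
  set ρ' := restrict ρ (W₁ ∪ W₂)
  have hsep : IsSeparative (reductionCon ρ').Quotient :=
    isSeparative_of_primelyGenerated isRefinement_reductionCon
      (primelyGenerated_of_wellFounded isRefinement_reductionCon
        (wellFounded_algLT (finite_restrict_isSome _)))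
  have hab := hsep a b
    (by rw [← AddCon.coe_add, ← AddCon.coe_add, AddCon.eq]
        exact reductionCon_mono (restrict_mono Finset.subset_union_left) h₁)
    (by rw [← AddCon.coe_add, ← AddCon.coe_add, AddCon.eq]
        exact reductionCon_mono (restrict_mono Finset.subset_union_right) h₂)
  exact reductionCon_mono (fun _ _ h => (restrict_eq_some h).2) ((AddCon.eq _).1 hab)

end MultisetRewriting

open MultisetRewriting

open scoped Classical in
noncomputable def RowFiniteQuiver.rewriteRule (Q : RowFiniteQuiver) (v : Q.V) :
    Option (Multiset Q.V) :=
  if ∃ e : Q.E, Q.s e = v then some ((Q.rowFinite v).toFinset.val.map Q.r) else none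

theorem addConGen_graphRel_eq (Q : RowFiniteQuiver) :
    addConGen (graphRel Q) = reductionCon Q.rewriteRule := by
  refine le_antisymm (AddCon.addConGen_le.2 ?_) (reductionCon_le fun v R hv => ?_)
  · rintro _ _ ⟨v, hv, rfl, rfl⟩
    exact reductionCon_of_eq_some (if_pos hv)
  · by_cases hs : ∃ e : Q.E, Q.s e = v
    · rw [RowFiniteQuiver.rewriteRule, if_pos hs, Option.some_inj] at hv
      exact AddConGen.Rel.of _ _ ⟨v, hs, rfl, hv.symm⟩
    · simp [RowFiniteQuiver.rewriteRule, hs] at hv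

/-- For every row-finite quiver, the graph monoid is separative. -/
theorem statement5 (Q : RowFiniteQuiver) :
    IsSeparative (GraphMonoid Q) := by
  show IsSeparative (addConGen (graphRel Q)).Quotient
  rw [addConGen_graphRel_eq]
  exact isSeparative_reductionCon _
end

section
/- A primitive monoid M is strongly separative if and only if every prime element of M is free. -/
/-- Strongly separative: `a + a = a + b` implies `a = b`. -/
def IsStronglySeparative (M : Type*) [AddCommMonoid M] : Prop :=
  ∀ a b : M, a + a = a + b → a = b

/-!
Write elements of a primitive monoid as sums of primes. Two properties pass from summands to
sums: `a` cancels up to elements it absorbs (`a + x = a + y` gives `x + v = y + u` with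
`a + u = a = a + v`), and `c + u + u = c + u` forces `c + u = c`. A prime `p` has the first
property since, refining `p + x = p + y`, either the two copies of `p` match up or `x = y`. A free
prime `q` has the second, since otherwise cancelling `q` from `q + (X + q) = q + X` produces an
element absorbed by `q` and above `q`, i.e. `q + q = q`. Now if `a + a = a + b`, cancelling `a`
gives `a = b + u` with `a + u = a`, so `b + u + u = b + u` and hence `a = b + u = b`.
-/

def CancelsModAbsorbed {M : Type*} [AddCommMonoid M] (a : M) : Prop :=
  ∀ x y : M, a + x = a + y → ∃ u v : M, a + u = a ∧ a + v = a ∧ x + v = y + u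

/-- For `c = 0` this says that `u + u = u` forces `u = 0`; a prime of a primitive monoid is
free exactly when it has this property. -/
def IsFreeElem {M : Type*} [AddCommMonoid M] (u : M) : Prop :=
  ∀ c : M, c + u + u = c + u → c + u = c

section

variable {M : Type*} [AddCommMonoid M]

theorem PrimelyGenerated.induction (hgen : PrimelyGenerated M) {P : M → Prop} (zero : P 0)
    (add : ∀ a b, P a → P b → P (a + b)) (prime : ∀ p, IsPrimeElem p → P p) (x : M) : P x := by
  obtain ⟨l, hl, rfl⟩ := hgen x
  exact Multiset.sum_induction P l add zero fun p hp => prime p (hl p hp)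

theorem add_eq_self_of_add_add_eq_self (hanti : IsAntisymmetric M) {x d e : M}
    (h : x + d + e = x) : x + d = x :=
  hanti _ _ ⟨e, h.symm⟩ ⟨d, rfl⟩

theorem IsPrimeElem.exists_of_add_eq_add (href : IsRefinement M) (hanti : IsAntisymmetric M)
    {p x y : M} (hp : IsPrimeElem p) (h : p + x = p + y) :
    ∃ z t w : M, x = z + w ∧ y = t + w ∧ p + z = p ∧ p + t = p := by
  obtain ⟨α, β, γ, δ, hαβ, hx, hαγ, hy⟩ := href p x p y h
  by_cases hpα : AlgLE p α
  · have hαp : α = p := hanti α p ⟨β, hαβ⟩ hpα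
    subst hαp
    exact ⟨γ, β, δ, hx, hy, hαγ.symm, hαβ.symm⟩
  · have hβ : β = p := hanti β p ⟨α, by rw [hαβ, add_comm]⟩
      ((hp.2 α β ⟨0, by rw [add_zero, ← hαβ]⟩).resolve_left hpα)
    have hγ : γ = p := hanti γ p ⟨α, by rw [hαγ, add_comm]⟩
      ((hp.2 α γ ⟨0, by rw [add_zero, ← hαγ]⟩).resolve_left hpα)
    have hxy : x = y := by rw [hx, hy, hβ, hγ]
    exact ⟨0, 0, x, (zero_add x).symm, by rw [zero_add, hxy], add_zero p, add_zero p⟩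

theorem IsPrimeElem.cancelsModAbsorbed (href : IsRefinement M) (hanti : IsAntisymmetric M)
    {p : M} (hp : IsPrimeElem p) : CancelsModAbsorbed p := by
  intro x y h
  obtain ⟨z, t, w, rfl, rfl, hz, ht⟩ := hp.exists_of_add_eq_add href hanti h
  exact ⟨z, t, hz, ht, by abel⟩

theorem cancelsModAbsorbed_zero : CancelsModAbsorbed (0 : M) := by
  intro x y h
  simp only [zero_add] at h
  exact ⟨0, 0, add_zero 0, add_zero 0, by rw [h]⟩

theorem CancelsModAbsorbed.add {a b : M} (ha : CancelsModAbsorbed a) (hb : CancelsModAbsorbed b) :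
    CancelsModAbsorbed (a + b) := by
  intro x y h
  obtain ⟨u₁, v₁, hu₁, hv₁, h₁⟩ := ha (b + x) (b + y) (by simpa only [add_assoc] using h)
  obtain ⟨u₂, v₂, hu₂, hv₂, h₂⟩ := hb (x + v₁) (y + u₁) (by simpa only [add_assoc] using h₁)
  refine ⟨u₁ + u₂, v₁ + v₂, ?_, ?_, ?_⟩
  · rw [add_add_add_comm, hu₁, hu₂]
  · rw [add_add_add_comm, hv₁, hv₂]
  · rw [← add_assoc, h₂, add_assoc]

theorem IsPrimitive.cancelsModAbsorbed (hM : IsPrimitive M) (a : M) : CancelsModAbsorbed a :=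
  hM.2.1.induction cancelsModAbsorbed_zero (fun _ _ => CancelsModAbsorbed.add)
    (fun _ hp => hp.cancelsModAbsorbed hM.2.2 hM.1) a

theorem IsPrimeElem.isFreeElem (href : IsRefinement M) (hanti : IsAntisymmetric M) {q : M}
    (hq : IsPrimeElem q) (hfree : q + q ≠ q) : IsFreeElem q := by
  intro X h
  obtain ⟨z, t, w, hzw, rfl, hz, ht⟩ :=
    hq.exists_of_add_eq_add href hanti (show q + (X + q) = q + X by rw [add_comm q, add_comm q, h])
  rcases hq.2 z w ⟨t + w, by rw [← hzw, add_comm]⟩ with hqz | ⟨w', rfl⟩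
  · exact absurd (hanti z q ⟨q, by rw [add_comm, hz]⟩ hqz ▸ hz) hfree
  · have hX : t + (q + w') = q + w' := by rw [← add_assoc, add_comm t, ht]
    rw [hzw, hX, ← add_assoc, add_comm z q, hz]

theorem isFreeElem_zero : IsFreeElem (0 : M) := fun c _ => add_zero c

theorem IsFreeElem.add (hanti : IsAntisymmetric M) {u v : M} (hu : IsFreeElem u)
    (hv : IsFreeElem v) : IsFreeElem (u + v) := by
  intro c h
  have hY : c + (u + v) + u + v = c + (u + v) := by rwa [add_assoc _ u v]
  have hYu : c + (u + v) + u = c + (u + v) := add_eq_self_of_add_add_eq_self hanti hY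
  have hYv : c + (u + v) + v = c + (u + v) :=
    add_eq_self_of_add_add_eq_self hanti ((add_right_comm _ v u).trans hY)
  have hcvu : c + v + u = c + v := hu (c + v) <| calc
    c + v + u + u = c + (u + v) + u := by abel
    _ = c + v + u := by rw [hYu]; abel
  have hcv : c + v = c := hv c <| calc
    c + v + v = c + (u + v) + v := by rw [← hcvu]; abel
    _ = c + v := by rw [hYv, ← hcvu]; abel
  rw [← add_assoc, add_right_comm, hcvu, hcv]

theorem IsPrimitive.isFreeElem (hM : IsPrimitive M)
    (hfree : ∀ p : M, IsPrimeElem p → p + p ≠ p) (u : M) : IsFreeElem u :=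
  hM.2.1.induction isFreeElem_zero (fun _ _ ha hb => ha.add hM.1 hb)
    (fun p hp => hp.isFreeElem hM.2.2 hM.1 (hfree p hp)) u

end

/-- A primitive monoid is strongly separative iff every prime is free
(i.e. `p + p ≠ p`). -/
theorem statement10 (M : Type*) [AddCommMonoid M] (hM : IsPrimitive M) :
    IsStronglySeparative M ↔ ∀ p : M, IsPrimeElem p → p + p ≠ p := by
  refine ⟨fun hss p hp hpp => hp.1 (hss p 0 (by rwa [add_zero])), fun hfree a b h => ?_⟩
  obtain ⟨u, v, hu, hv, hvu⟩ := hM.cancelsModAbsorbed a a b h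
  have hab : a = b + u := by rw [← hvu, hv]
  calc a = b + u := hab
    _ = b := hM.isFreeElem hfree u b (by rw [← hab, hu])
end

section
/- Let S be a join-semilattice with least element 0, regarded as a commutative monoid with addition x + y := x ⊔ y. Then S is a refinement monoid if and only if S is a distributive semilattice, i.e., for all a, b, c ∈ S with a ≤ b ⊔ c there exist b' ≤ b and c' ≤ c with a = b' ⊔ c'. -/
/-!
Refinement specialises to distributivity by refining `a ⊔ (b ⊔ c) = b ⊔ c` when `a ≤ b ⊔ c`.
Conversely, given `a ⊔ b = c ⊔ d`, distributivity splits each of the four elements along the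
opposite side, e.g. `a = a_c ⊔ a_d` with `a_c ≤ c` and `c = c_a ⊔ c_b` with `c_a ≤ a`; then
`x = a_c ⊔ c_a`, `y = a_d ⊔ d_a`, `z = b_c ⊔ c_b`, `w = b_d ⊔ d_b` is a refinement: each lies
below both elements it refines, and already `a_c ⊔ a_d` recovers `a` (and likewise for `b, c, d`).
-/

section SemilatticeSup

variable {S : Type*} [SemilatticeSup S]

theorem le_sup_distrib_of_refinement
    (href : ∀ a b c d : S, a ⊔ b = c ⊔ d →
      ∃ x y z w : S, a = x ⊔ y ∧ b = z ⊔ w ∧ c = x ⊔ z ∧ d = y ⊔ w)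
    {a b c : S} (hle : a ≤ b ⊔ c) : ∃ b' c' : S, b' ≤ b ∧ c' ≤ c ∧ a = b' ⊔ c' := by
  obtain ⟨x, y, z, w, ha, -, hb, hc⟩ := href a (b ⊔ c) b c (sup_eq_right.2 hle)
  exact ⟨x, y, le_sup_left.trans hb.ge, le_sup_left.trans hc.ge, ha⟩

theorem eq_sup_of_eq_sup_of_le {a p q x y : S} (h : a = p ⊔ q) (hp : p ≤ x) (hq : q ≤ y)
    (hx : x ≤ a) (hy : y ≤ a) : a = x ⊔ y :=
  le_antisymm (h ▸ sup_le_sup hp hq) (sup_le hx hy)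

theorem refinement_of_le_sup_distrib
    (hdist : ∀ a b c : S, a ≤ b ⊔ c → ∃ b' c' : S, b' ≤ b ∧ c' ≤ c ∧ a = b' ⊔ c')
    {a b c d : S} (h : a ⊔ b = c ⊔ d) :
    ∃ x y z w : S, a = x ⊔ y ∧ b = z ⊔ w ∧ c = x ⊔ z ∧ d = y ⊔ w := by
  obtain ⟨ac, ad, hac, had, ha⟩ := hdist a c d (h ▸ le_sup_left)
  obtain ⟨bc, bd, hbc, hbd, hb⟩ := hdist b c d (h ▸ le_sup_right)
  obtain ⟨ca, cb, hca, hcb, hc⟩ := hdist c a b (h ▸ le_sup_left)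
  obtain ⟨da, db, hda, hdb, hd⟩ := hdist d a b (h ▸ le_sup_right)
  refine ⟨ac ⊔ ca, ad ⊔ da, bc ⊔ cb, bd ⊔ db, ?_, ?_, ?_, ?_⟩
  · exact eq_sup_of_eq_sup_of_le ha le_sup_left le_sup_left
      (sup_le (ha ▸ le_sup_left) hca) (sup_le (ha ▸ le_sup_right) hda)
  · exact eq_sup_of_eq_sup_of_le hb le_sup_left le_sup_left
      (sup_le (hb ▸ le_sup_left) hcb) (sup_le (hb ▸ le_sup_right) hdb)
  · exact eq_sup_of_eq_sup_of_le hc le_sup_right le_sup_right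
      (sup_le hac (hc ▸ le_sup_left)) (sup_le hbc (hc ▸ le_sup_right))
  · exact eq_sup_of_eq_sup_of_le hd le_sup_right le_sup_right
      (sup_le had (hd ▸ le_sup_left)) (sup_le hbd (hd ▸ le_sup_right))

end SemilatticeSup

theorem statement13_general (S : Type*) [SemilatticeSup S] :
    (∀ a b c d : S, a ⊔ b = c ⊔ d →
      ∃ x y z w : S, a = x ⊔ y ∧ b = z ⊔ w ∧ c = x ⊔ z ∧ d = y ⊔ w) ↔
    (∀ a b c : S, a ≤ b ⊔ c → ∃ b' c' : S, b' ≤ b ∧ c' ≤ c ∧ a = b' ⊔ c') :=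
  ⟨fun href _ _ _ => le_sup_distrib_of_refinement href,
    fun hdist _ _ _ _ => refinement_of_le_sup_distrib hdist⟩

/-- A join-semilattice with least element, viewed as a commutative monoid with
`x + y := x ⊔ y`, is a refinement monoid iff it is a distributive semilattice. -/
theorem statement13 (S : Type*) [SemilatticeSup S] [OrderBot S] :
    (∀ a b c d : S, a ⊔ b = c ⊔ d →
      ∃ x y z w : S, a = x ⊔ y ∧ b = z ⊔ w ∧ c = x ⊔ z ∧ d = y ⊔ w) ↔
    (∀ a b c : S, a ≤ b ⊔ c → ∃ b' c' : S, b' ≤ b ∧ c' ≤ c ∧ a = b' ⊔ c') :=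
  statement13_general S
end

section
/- Let R be a unital von Neumann regular ring, let I and J be right ideals of R with I ∩ J = 0, let K be a two-sided ideal of R, and let π : R → R/K be the quotient map. Then π(I) ∩ π(J) = 0 in R/K. -/
/-!
If `π x = π y` with `x ∈ I`, `y ∈ J`, then `a := x - y` lies in `K`; choose `b` with `a b a = a`.
Then `x - x b a = y - y b a`, because their difference is `a - a b a = 0`. The left side lies in
`I`, the right side in `J`, so both vanish and `x = (x b) a ∈ K`.
-/

/-- A (two-sided) ideal of a ring, as a subset. -/
def IsTwoSidedIdealSet {R : Type*} [Ring R] (I : Set R) : Prop :=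
  (0 : R) ∈ I ∧ (∀ x y : R, x ∈ I → y ∈ I → x + y ∈ I) ∧ (∀ x : R, x ∈ I → -x ∈ I) ∧
    (∀ r x : R, x ∈ I → r * x ∈ I) ∧ (∀ r x : R, x ∈ I → x * r ∈ I)

/-- A right ideal of a ring, as a subset. -/
def IsRightIdealSet {R : Type*} [Ring R] (I : Set R) : Prop :=
  (0 : R) ∈ I ∧ (∀ x y : R, x ∈ I → y ∈ I → x + y ∈ I) ∧ (∀ x : R, x ∈ I → -x ∈ I) ∧
    ∀ x r : R, x ∈ I → x * r ∈ I

namespace IsRightIdealSet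

variable {R : Type*} [Ring R] {I J : Set R}

theorem sub_mul_mem (hI : IsRightIdealSet I) {x : R} (hx : x ∈ I) (r : R) : x - x * r ∈ I := by
  obtain ⟨-, hadd, hneg, hmul⟩ := hI
  simpa only [sub_eq_add_neg] using hadd _ _ hx (hneg _ (hmul x r hx))

theorem eq_mul_sub_of_inter_subset_zero (hI : IsRightIdealSet I) (hJ : IsRightIdealSet J)
    (hIJ : I ∩ J ⊆ {0}) {x y b : R} (hx : x ∈ I) (hy : y ∈ J)
    (hb : (x - y) * b * (x - y) = x - y) : x = x * b * (x - y) := by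
  set c := b * (x - y)
  have hsame : x - x * c = y - y * c := by
    rw [← sub_eq_zero]
    calc x - x * c - (y - y * c) = (x - y) - (x - y) * b * (x - y) := by
          simp only [c, mul_assoc]; noncomm_ring
      _ = 0 := by rw [hb, sub_self]
  have hzero : x - x * c = 0 :=
    hIJ ⟨hI.sub_mul_mem hx c, hsame ▸ hJ.sub_mul_mem hy c⟩
  rw [mul_assoc]
  exact sub_eq_zero.mp hzero

end IsRightIdealSet

theorem statement16_general (R S : Type*) [Ring R] [Ring S]
    (hreg : ∀ a : R, ∃ b : R, a * b * a = a)
    (K : Set R) (hK : IsTwoSidedIdealSet K)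
    (π : R →+* S) (hker : ∀ x : R, π x = 0 ↔ x ∈ K)
    (I J : Set R) (hI : IsRightIdealSet I) (hJ : IsRightIdealSet J)
    (hIJ : I ∩ J ⊆ {0}) :
    (π '' I) ∩ (π '' J) ⊆ {0} := by
  rintro _ ⟨⟨x, hx, rfl⟩, ⟨y, hy, hxy⟩⟩
  have hdiff : x - y ∈ K := (hker _).mp (by rw [map_sub, hxy, sub_self])
  obtain ⟨b, hb⟩ := hreg (x - y)
  have hxK : x ∈ K := by
    rw [IsRightIdealSet.eq_mul_sub_of_inter_subset_zero hI hJ hIJ hx hy hb]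
    exact hK.2.2.2.1 (x * b) _ hdiff
  exact (hker x).mpr hxK

/-- Over a unital von Neumann regular ring `R`, if two right ideals `I`, `J`
satisfy `I ∩ J = 0` and `π : R → R/K` is the quotient map modulo a two-sided
ideal `K`, then `π(I) ∩ π(J) = 0`. -/
theorem statement16 (R S : Type*) [Ring R] [Ring S]
    (hreg : ∀ a : R, ∃ b : R, a * b * a = a)
    (K : Set R) (hK : IsTwoSidedIdealSet K)
    (π : R →+* S) (hsurj : Function.Surjective π) (hker : ∀ x : R, π x = 0 ↔ x ∈ K)
    (I J : Set R) (hI : IsRightIdealSet I) (hJ : IsRightIdealSet J)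
    (hIJ : I ∩ J ⊆ {0}) :
    (π '' I) ∩ (π '' J) ⊆ {0} :=
  statement16_general R S hreg K hK π hker I J hI hJ hIJ
end

section
/- Let R be a unital von Neumann regular ring and let (e_n)_{n≥1} be a sequence of idempotents of R with e_n e_{n+1} = e_{n+1} e_n = e_n for all n. Let I be the set of all sequences x = (x_n)_{n≥1} in the product ring ∏_n R such that x_n = e_n x_n e_n for all n and, for every i, there exists N such that x_m e_i = e_i x_m = 0 for all m ≥ N. Then I is closed under addition, negation and multiplication in ∏_n R (i.e., I is a possibly non-unital subring), and I is von Neumann regular: for every x ∈ I there exists y ∈ I with x y x = x. -/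
/-!
Given `x` in `I`, choose inner inverses `b m` of the `x m` in `R`. The sequence of the `b m`
need not lie in `I`, so it is cut down on both sides by `e m - g m`, where `g m` is the largest
`e k` with `k ≤ m` that annihilates `x m` on both sides (or `0` if there is none). This does
not disturb `x m * b m * x m`, and since `x` converges strictly to `0` the index of `g m` tends
to infinity, which forces the cut-down sequence to converge strictly to `0` as well.
-/

open Filter

section

variable {R : Type*} [Ring R]

theorem IsIdempotentElem.mul_eq_self_of_eq_mul_mul {e x : R} (he : IsIdempotentElem e)
    (hx : x = e * x * e) : x * e = x := by
  rw [hx, mul_assoc, he.eq]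

theorem IsIdempotentElem.mul_eq_self_of_eq_mul_mul' {e x : R} (he : IsIdempotentElem e)
    (hx : x = e * x * e) : e * x = x := by
  rw [hx, ← mul_assoc, ← mul_assoc, he.eq]

theorem mul_eq_of_le_of_chain {e : ℕ → R} (hidem : ∀ n, IsIdempotentElem (e n))
    (hle : ∀ n, e n * e (n + 1) = e n ∧ e (n + 1) * e n = e n) {i j : ℕ} (hij : i ≤ j) :
    e i * e j = e i ∧ e j * e i = e i := by
  induction j, hij using Nat.le_induction with
  | base => exact ⟨hidem i, hidem i⟩
  | succ j _ ih =>
    exact ⟨by rw [← ih.1, mul_assoc, (hle j).1], by rw [← ih.2, ← mul_assoc, (hle j).2]⟩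

def strictNullCornerSeqs (e : ℕ → R) (hidem : ∀ n, IsIdempotentElem (e n)) :
    NonUnitalSubring (ℕ → R) where
  carrier := {x | (∀ n, x n = e n * x n * e n) ∧
    ∀ i, ∀ᶠ m in atTop, x m * e i = 0 ∧ e i * x m = 0}
  zero_mem' := ⟨fun n => by simp, fun i => by simp⟩
  add_mem' := by
    rintro x y ⟨hx, hx₀⟩ ⟨hy, hy₀⟩
    refine ⟨fun n => ?_, fun i => ((hx₀ i).and (hy₀ i)).mono fun m h => ?_⟩
    · simp only [Pi.add_apply, mul_add, add_mul, ← hx n, ← hy n]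
    · simp [add_mul, mul_add, h.1.1, h.1.2, h.2.1, h.2.2]
  neg_mem' := by
    rintro x ⟨hx, hx₀⟩
    refine ⟨fun n => ?_, fun i => (hx₀ i).mono fun m h => ?_⟩
    · simp only [Pi.neg_apply, mul_neg, neg_mul, ← hx n]
    · simp [h.1, h.2]
  mul_mem' := by
    rintro x y ⟨hx, hx₀⟩ ⟨hy, hy₀⟩
    refine ⟨fun n => ?_, fun i => ((hx₀ i).and (hy₀ i)).mono fun m h => ?_⟩
    · rw [Pi.mul_apply, mul_assoc, mul_assoc, (hidem n).mul_eq_self_of_eq_mul_mul (hy n),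
        ← mul_assoc, (hidem n).mul_eq_self_of_eq_mul_mul' (hx n)]
    · exact ⟨by rw [Pi.mul_apply, mul_assoc, h.2.1, mul_zero],
        by rw [Pi.mul_apply, ← mul_assoc, h.1.2, zero_mul]⟩

theorem mem_strictNullCornerSeqs_iff {e : ℕ → R} {hidem : ∀ n, IsIdempotentElem (e n)}
    {x : ℕ → R} : x ∈ strictNullCornerSeqs e hidem ↔ (∀ n, x n = e n * x n * e n) ∧
      ∀ i, ∃ N, ∀ m ≥ N, x m * e i = 0 ∧ e i * x m = 0 := by
  simp only [strictNullCornerSeqs, ← eventually_atTop]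
  rfl

theorem exists_annihilators_eventually_absorbing {e : ℕ → R}
    (hidem : ∀ n, IsIdempotentElem (e n))
    (hle : ∀ n, e n * e (n + 1) = e n ∧ e (n + 1) * e n = e n) {x : ℕ → R}
    (hx : x ∈ strictNullCornerSeqs e hidem) :
    ∃ g : ℕ → R, (∀ m, g m * e m = g m ∧ e m * g m = g m) ∧
      (∀ m, x m * g m = 0 ∧ g m * x m = 0) ∧
      ∀ i, ∀ᶠ m in atTop, e i * g m = e i ∧ g m * e i = e i := by
  classical
  let P (m i : ℕ) : Prop := x m * e i = 0 ∧ e i * x m = 0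
  let k (m : ℕ) : ℕ := Nat.findGreatest (P m) m
  refine ⟨fun m => if P m (k m) then e (k m) else 0, fun m => ?_, fun m => ?_, fun i => ?_⟩
  · dsimp only
    split_ifs
    · exact mul_eq_of_le_of_chain hidem hle (Nat.findGreatest_le m)
    · simp
  · dsimp only
    split_ifs with h
    · exact h
    · simp
  · refine ((hx.2 i).and (eventually_ge_atTop i)).mono fun m ⟨hP, him⟩ => ?_
    have hk : P m (k m) := Nat.findGreatest_spec him hP
    dsimp only
    rw [if_pos hk]
    exact mul_eq_of_le_of_chain hidem hle (Nat.le_findGreatest (P := P m) him hP)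

theorem exists_mem_strictNullCornerSeqs_mul_mul_eq_self (hreg : ∀ a : R, ∃ b, a * b * a = a)
    {e : ℕ → R} (hidem : ∀ n, IsIdempotentElem (e n))
    (hle : ∀ n, e n * e (n + 1) = e n ∧ e (n + 1) * e n = e n) {x : ℕ → R}
    (hx : x ∈ strictNullCornerSeqs e hidem) :
    ∃ y ∈ strictNullCornerSeqs e hidem, x * y * x = x := by
  choose b hb using fun m => hreg (x m)
  obtain ⟨g, hge, hxg, hg⟩ := exists_annihilators_eventually_absorbing hidem hle hx
  have hcut_left (m : ℕ) : e m * (e m - g m) = e m - g m := by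
    rw [mul_sub, (hidem m).eq, (hge m).2]
  have hcut_right (m : ℕ) : (e m - g m) * e m = e m - g m := by
    rw [sub_mul, (hidem m).eq, (hge m).1]
  refine ⟨fun m => (e m - g m) * b m * (e m - g m), ⟨fun n => ?_, fun i => ?_⟩, ?_⟩
  · calc (e n - g n) * b n * (e n - g n)
        = e n * (e n - g n) * b n * ((e n - g n) * e n) := by rw [hcut_left, hcut_right]
      _ = e n * ((e n - g n) * b n * (e n - g n)) * e n := by simp only [mul_assoc]
  · refine ((hg i).and (eventually_ge_atTop i)).mono fun m ⟨hgi, him⟩ => ?_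
    have hei := mul_eq_of_le_of_chain hidem hle him
    have h₁ : (e m - g m) * e i = 0 := by rw [sub_mul, hei.2, hgi.2, sub_self]
    have h₂ : e i * (e m - g m) = 0 := by rw [mul_sub, hei.1, hgi.1, sub_self]
    exact ⟨by rw [mul_assoc, h₁, mul_zero],
      by rw [← mul_assoc, ← mul_assoc, h₂, zero_mul, zero_mul]⟩
  · funext m
    have h₁ : x m * (e m - g m) = x m := by
      rw [mul_sub, (hidem m).mul_eq_self_of_eq_mul_mul (hx.1 m), (hxg m).1, sub_zero]
    have h₂ : (e m - g m) * x m = x m := by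
      rw [sub_mul, (hidem m).mul_eq_self_of_eq_mul_mul' (hx.1 m), (hxg m).2, sub_zero]
    calc x m * ((e m - g m) * b m * (e m - g m)) * x m
        = x m * (e m - g m) * b m * ((e m - g m) * x m) := by simp only [mul_assoc]
      _ = x m := by rw [h₁, h₂, hb m]

end

/-- Let `R` be a unital von Neumann regular ring with an increasing sequence of
idempotents `(e_n)`.  The set `I` of sequences `(x_n)` in `∏_n e_n R e_n`
converging strictly to `0` is a (non-unital) subring of `∏_n R` and is von
Neumann regular. -/
theorem statement17 (R : Type*) [Ring R] (hreg : ∀ a : R, ∃ b : R, a * b * a = a)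
    (e : ℕ → R) (hidem : ∀ n : ℕ, e n * e n = e n)
    (hle : ∀ n : ℕ, e n * e (n + 1) = e n ∧ e (n + 1) * e n = e n) :
    let I : Set (ℕ → R) := {x : ℕ → R | (∀ n, x n = e n * x n * e n) ∧
      ∀ i : ℕ, ∃ N : ℕ, ∀ m ≥ N, x m * e i = 0 ∧ e i * x m = 0}
    (∀ x y : ℕ → R, x ∈ I → y ∈ I → x + y ∈ I) ∧
    (∀ x : ℕ → R, x ∈ I → -x ∈ I) ∧
    (∀ x y : ℕ → R, x ∈ I → y ∈ I → x * y ∈ I) ∧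
    (∀ x ∈ I, ∃ y ∈ I, x * y * x = x) := by
  intro I
  let S := strictNullCornerSeqs e hidem
  have hI : I = S := Set.ext fun x => mem_strictNullCornerSeqs_iff.symm
  rw [hI]
  exact ⟨fun _ _ => S.add_mem, fun _ => S.neg_mem, fun _ _ => S.mul_mem,
    fun _ => exists_mem_strictNullCornerSeqs_mul_mul_eq_self hreg hidem hle⟩
end

section
/- Let K be a field and let V and W be K-vector spaces, each of countably infinite dimension, equipped with a bilinear form β : V × W → K that is nondegenerate in both variables (β(v, ·) = 0 implies v = 0, and β(·, w) = 0 implies w = 0). Then there exist a basis (v_i)_{i∈ℕ} of V and a basis (w_j)_{j∈ℕ} of W that are dual to each other: β(v_i, w_j) = 1 if i = j and β(v_i, w_j) = 0 if i ≠ j. -/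
/-!
Back-and-forth Gram–Schmidt. Enumerate bases `(e_k)` of `V` and `(f_k)` of `W` and build a
biorthogonal system `(v_i, w_i)` one pair at a time, alternately forcing the next `e_k` into the
span of the `v_i` and the next `f_k` into the span of the `w_i`. To adjoin `x`, subtract its
component `∑ β x (w_i) • v_i` along the system; the remainder `a` is orthogonal to all `w_i`, and
nondegeneracy gives some `b` with `β a b ≠ 0`, which after the dual projection and scaling pairs
with `a`. If `x` is already covered, infinite dimensionality supplies a vector outside the span.
-/

open Submodule Set

theorem exists_seq_of_forall_exists_snoc {α : Type*} (P : ∀ n, (Fin n → α) → Prop)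
    (h0 : P 0 Fin.elim0) (hstep : ∀ n p, P n p → ∃ a, P (n + 1) (Fin.snoc p a)) :
    ∃ f : ℕ → α, ∀ n, P n (fun i => f i) := by
  choose next hnext using hstep
  let g : ∀ n, {p : Fin n → α // P n p} := fun n =>
    Nat.rec ⟨Fin.elim0, h0⟩ (fun n q => ⟨_, hnext n q.1 q.2⟩) n
  refine ⟨fun n => next n (g n).1 (g n).2, fun n => ?_⟩
  suffices hg : ∀ n, (g n).1 = fun i : Fin n => next i (g i).1 (g i).2 from hg n ▸ (g n).2
  intro n
  induction n with
  | zero => exact funext fun i => i.elim0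
  | succ n ih =>
    funext i
    induction i using Fin.lastCases with
    | last => exact Fin.snoc_last (α := fun _ => α) _ _
    | cast i => exact (Fin.snoc_castSucc (α := fun _ => α) _ _ _).trans (congrFun ih i)

theorem span_range_ne_top_of_not_finite {R M ι : Type*} [Semiring R] [AddCommMonoid M]
    [Module R M] [Finite ι] (hM : ¬ Module.Finite R M) (v : ι → M) : span R (range v) ≠ ⊤ :=
  fun htop => hM ⟨htop ▸ fg_span (finite_range v)⟩

section Biorthogonal

variable {K V W ι : Type*} [Field K] [AddCommGroup V] [Module K V] [AddCommGroup W] [Module K W]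

def IsBiorthogonal [DecidableEq ι] (β : V →ₗ[K] W →ₗ[K] K) (v : ι → V) (w : ι → W) : Prop :=
  ∀ i j, β (v i) (w j) = if i = j then 1 else 0

namespace IsBiorthogonal

variable [DecidableEq ι] {β : V →ₗ[K] W →ₗ[K] K} {v : ι → V} {w : ι → W}

theorem flip (h : IsBiorthogonal β v w) : IsBiorthogonal β.flip w v := fun i j => by
  rw [LinearMap.flip_apply, h]
  exact if_congr eq_comm rfl rfl

theorem linearIndependent_left (h : IsBiorthogonal β v w) : LinearIndependent K v := by
  refine LinearIndependent.of_comp (LinearMap.pi fun j => β.flip (w j)) ?_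
  have hcomp : (LinearMap.pi fun j => β.flip (w j)) ∘ v = fun i => Pi.single i 1 := by
    ext i j
    simp [h i j, Pi.single_apply, eq_comm]
  rw [hcomp]
  exact Pi.linearIndependent_single_one ι K

theorem linearIndependent_right (h : IsBiorthogonal β v w) : LinearIndependent K w :=
  h.flip.linearIndependent_left

theorem snoc {n : ℕ} {v : Fin n → V} {w : Fin n → W} (h : IsBiorthogonal β v w) {a : V} {b : W}
    (ha : ∀ j, β a (w j) = 0) (hb : ∀ i, β (v i) b = 0) (hab : β a b = 1) :
    IsBiorthogonal β (Fin.snoc v a) (Fin.snoc w b) := by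
  intro i j
  induction i using Fin.lastCases with
  | last =>
    induction j using Fin.lastCases with
    | last => simpa using hab
    | cast j => simpa [(Fin.castSucc_lt_last j).ne'] using ha j
  | cast i =>
    induction j using Fin.lastCases with
    | last => simpa [(Fin.castSucc_lt_last i).ne] using hb i
    | cast j => simpa using h i j

variable [Fintype ι]

theorem apply_sub_sum_eq_zero (h : IsBiorthogonal β v w) (x : V) (j : ι) :
    β (x - ∑ i, β x (w i) • v i) (w j) = 0 := by
  simp [fun i => h i j]

theorem exists_extend (hndV : ∀ x : V, (∀ y : W, β x y = 0) → x = 0)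
    (h : IsBiorthogonal β v w) {x : V} (hx : x ∉ span K (range v)) :
    ∃ a b, (∀ j, β a (w j) = 0) ∧ (∀ i, β (v i) b = 0) ∧ β a b = 1 ∧
      x ∈ span K (insert a (range v)) := by
  set a := x - ∑ i, β x (w i) • v i
  have ha : ∀ j, β a (w j) = 0 := h.apply_sub_sum_eq_zero x
  have hsum : ∑ i, β x (w i) • v i ∈ span K (range v) :=
    (mem_span_range_iff_exists_fun K).2 ⟨_, rfl⟩
  have ha₀ : a ≠ 0 := fun h₀ => hx (sub_eq_zero.1 h₀ ▸ hsum)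
  obtain ⟨b₀, hb₀⟩ : ∃ b₀, β a b₀ ≠ 0 := not_forall.1 (mt (hndV a) ha₀)
  set b := b₀ - ∑ j, β.flip b₀ (v j) • w j
  have hb : ∀ i, β (v i) b = 0 := h.flip.apply_sub_sum_eq_zero b₀
  have hab : β a b = β a b₀ := by simp [b, ha]
  refine ⟨a, (β a b₀)⁻¹ • b, ha, fun i => by simp [hb i], by simp [hab, hb₀], ?_⟩
  rw [← sub_add_cancel x (∑ i, β x (w i) • v i)]
  exact add_mem (subset_span (mem_insert a _)) (span_mono (subset_insert a _) hsum)

theorem exists_extend_left (hV : ¬ Module.Finite K V)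
    (hndV : ∀ x : V, (∀ y : W, β x y = 0) → x = 0) (h : IsBiorthogonal β v w) (x : V) :
    ∃ a b, (∀ j, β a (w j) = 0) ∧ (∀ i, β (v i) b = 0) ∧ β a b = 1 ∧
      x ∈ span K (insert a (range v)) := by
  by_cases hx : x ∈ span K (range v)
  · obtain ⟨z, -, hz⟩ := SetLike.exists_of_lt (span_range_ne_top_of_not_finite hV v).lt_top
    obtain ⟨a, b, ha, hb, hab, -⟩ := h.exists_extend hndV hz
    exact ⟨a, b, ha, hb, hab, span_mono (subset_insert a _) hx⟩
  · exact h.exists_extend hndV hx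

theorem exists_extend_right (hW : ¬ Module.Finite K W)
    (hndW : ∀ y : W, (∀ x : V, β x y = 0) → y = 0) (h : IsBiorthogonal β v w) (y : W) :
    ∃ a b, (∀ j, β a (w j) = 0) ∧ (∀ i, β (v i) b = 0) ∧ β a b = 1 ∧
      y ∈ span K (insert b (range w)) := by
  obtain ⟨b, a, hb, ha, hba, hy⟩ := h.flip.exists_extend_left hW hndW y
  exact ⟨a, b, ha, hb, hba, hy⟩

end IsBiorthogonal

def IsPartialDualSystem (β : V →ₗ[K] W →ₗ[K] K) (sV : ℕ → V) (sW : ℕ → W) (n : ℕ)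
    (p : Fin n → V × W) : Prop :=
  IsBiorthogonal β (Prod.fst ∘ p) (Prod.snd ∘ p) ∧
    (∀ k, 2 * k < n → sV k ∈ span K (range (Prod.fst ∘ p))) ∧
    (∀ k, 2 * k + 1 < n → sW k ∈ span K (range (Prod.snd ∘ p)))

theorem IsPartialDualSystem.exists_snoc {β : V →ₗ[K] W →ₗ[K] K} {sV : ℕ → V} {sW : ℕ → W}
    (hV : ¬ Module.Finite K V) (hW : ¬ Module.Finite K W)
    (hndV : ∀ x : V, (∀ y : W, β x y = 0) → x = 0)
    (hndW : ∀ y : W, (∀ x : V, β x y = 0) → y = 0)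
    {n : ℕ} {p : Fin n → V × W} (hp : IsPartialDualSystem β sV sW n p) :
    ∃ q, IsPartialDualSystem β sV sW (n + 1) (Fin.snoc p q) := by
  obtain ⟨hbi, hcV, hcW⟩ := hp
  simp only [IsPartialDualSystem, Fin.comp_snoc, Fin.range_snoc]
  rcases Nat.even_or_odd' n with ⟨k, rfl | rfl⟩
  · obtain ⟨a, b, ha, hb, hab, hmem⟩ := hbi.exists_extend_left hV hndV (sV k)
    refine ⟨(a, b), hbi.snoc ha hb hab, fun k' hk' => ?_, fun k' hk' => ?_⟩
    · obtain rfl | hk' : k' = k ∨ 2 * k' < 2 * k := by omega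
      · exact hmem
      · exact span_mono (subset_insert a _) (hcV k' hk')
    · exact span_mono (subset_insert b _) (hcW k' (by omega))
  · obtain ⟨a, b, ha, hb, hab, hmem⟩ := hbi.exists_extend_right hW hndW (sW k)
    refine ⟨(a, b), hbi.snoc ha hb hab, fun k' hk' => ?_, fun k' hk' => ?_⟩
    · exact span_mono (subset_insert a _) (hcV k' (by omega))
    · obtain rfl | hk' : k' = k ∨ 2 * k' + 1 < 2 * k + 1 := by omega
      · exact hmem
      · exact span_mono (subset_insert b _) (hcW k' hk')

end Biorthogonal

/-- (Mackey) If `V` and `W` are countably infinite dimensional vector spaces over a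
field `K` with a bilinear pairing `β : V × W → K` nondegenerate in both variables,
then `V` and `W` admit dual bases `(v_i)`, `(w_j)`: `β (v_i) (w_j) = δ_{ij}`. -/
theorem statement18 (K V W : Type*) [Field K]
    [AddCommGroup V] [Module K V] [AddCommGroup W] [Module K W]
    (hV : Nonempty (Module.Basis ℕ K V)) (hW : Nonempty (Module.Basis ℕ K W))
    (β : V →ₗ[K] W →ₗ[K] K)
    (hndV : ∀ v : V, (∀ w : W, β v w = 0) → v = 0)
    (hndW : ∀ w : W, (∀ v : V, β v w = 0) → w = 0) :
    ∃ (bV : Module.Basis ℕ K V) (bW : Module.Basis ℕ K W),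
      ∀ i j : ℕ, β (bV i) (bW j) = if i = j then (1 : K) else 0 := by
  obtain ⟨bV⟩ := hV
  obtain ⟨bW⟩ := hW
  obtain ⟨f, hf⟩ := exists_seq_of_forall_exists_snoc (IsPartialDualSystem β bV bW)
    ⟨fun i => i.elim0, fun k hk => by omega, fun k hk => by omega⟩
    fun n p hp => hp.exists_snoc (Module.not_finite_of_infinite_basis bV)
      (Module.not_finite_of_infinite_basis bW) hndV hndW
  have hbi : IsBiorthogonal β (fun n => (f n).1) (fun n => (f n).2) := fun i j => by
    simpa using (hf (max i j + 1)).1 ⟨i, by omega⟩ ⟨j, by omega⟩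
  have hspanV : ⊤ ≤ span K (range fun n => (f n).1) := by
    rw [← bV.span_eq, span_le]
    rintro _ ⟨k, rfl⟩
    exact span_mono (range_comp_subset_range Fin.val _) ((hf (2 * k + 1)).2.1 k (by omega))
  have hspanW : ⊤ ≤ span K (range fun n => (f n).2) := by
    rw [← bW.span_eq, span_le]
    rintro _ ⟨k, rfl⟩
    exact span_mono (range_comp_subset_range Fin.val _) ((hf (2 * k + 2)).2.2 k (by omega))
  exact ⟨.mk hbi.linearIndependent_left hspanV, .mk hbi.linearIndependent_right hspanW,
    fun i j => by simpa using hbi i j⟩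
end
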